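/- arXiv:1710.08986 — 8 statements merged into one kernel-verified Lean document; each statement's English description precedes it below -/
import Mathlib

section
/- Let S be a nonempty finite type, γ ∈ ℝ with 0 ≤ γ < 1, r : S → ℝ, and for each s ∈ S let l_s, u_s : S → ℝ satisfy 0 ≤ l_s ≤ u_s componentwise, (∑ t, l_s t) ≤ 1 and 1 ≤ (∑ t, u_s t); set U_s := {p : S → ℝ | (∀ t, l_s t ≤ p t ∧ p t ≤ u_s t) ∧ ∑ t, p t = 1}. Define T↓ : (S → ℝ) → (S → ℝ) by (T↓ v) s := r s + γ * sInf {x | ∃ p ∈ U_s, x = ∑ t, p t * v t}, and T↑ by the same formula with sSup in place of sInf. Then both T↓ and T↑ are Lipschitz with constant γ for the sup-norm: for all v, w : S → ℝ, (⨆ s, |(T↓ v) s − (T↓ w) s|) ≤ γ * (⨆ s, |v s − w s|), and the same inequality holds for T↑. -/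
section Aux

variable {S : Type} [Fintype S]

lemma aux_nonempty (l u : S → ℝ) (hlu : ∀ t, l t ≤ u t)
    (hsl : ∑ t, l t ≤ 1) (hsu : 1 ≤ ∑ t, u t) :
    ∃ p : S → ℝ, (∀ t, l t ≤ p t ∧ p t ≤ u t) ∧ ∑ t, p t = 1 := by
  have hsum : ∑ t, l t ≤ ∑ t, u t := Finset.sum_le_sum (fun t _ => hlu t)
  by_cases h : ∑ t, u t = ∑ t, l t
  · exact ⟨l, fun t => ⟨le_rfl, hlu t⟩, le_antisymm hsl (h ▸ hsu)⟩
  · have hd : 0 < ∑ t, u t - ∑ t, l t := sub_pos.mpr (lt_of_le_of_ne hsum (Ne.symm h))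
    set c : ℝ := (1 - ∑ t, l t) / (∑ t, u t - ∑ t, l t) with hc
    have hc0 : 0 ≤ c := div_nonneg (by linarith) hd.le
    have hc1 : c ≤ 1 := (div_le_one hd).mpr (by linarith)
    refine ⟨fun t => l t + c * (u t - l t), fun t => ⟨?_, ?_⟩, ?_⟩
    · show l t ≤ l t + c * (u t - l t); nlinarith [hlu t]
    · show l t + c * (u t - l t) ≤ u t; nlinarith [hlu t]
    · have : ∑ t, (l t + c * (u t - l t)) = ∑ t, l t + c * (∑ t, u t - ∑ t, l t) := by
        rw [Finset.sum_add_distrib, ← Finset.mul_sum, Finset.sum_sub_distrib]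
      rw [this, hc, div_mul_cancel₀]
      · ring
      · exact hd.ne'
    
-- key comparison for sInf / sSup
lemma aux_est (l u : S → ℝ) (hl0 : ∀ t, 0 ≤ l t)
    (v w : S → ℝ) (M : ℝ) (hM : ∀ t, v t - w t ≤ M)
    (p : S → ℝ) (hp : (∀ t, l t ≤ p t ∧ p t ≤ u t) ∧ ∑ t, p t = 1) :
    ∑ t, p t * v t ≤ ∑ t, p t * w t + M := by
  have h1 : ∑ t, p t * v t - ∑ t, p t * w t = ∑ t, p t * (v t - w t) := by
    rw [← Finset.sum_sub_distrib]; congr 1; ext t; ring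
  have h2 : ∑ t, p t * (v t - w t) ≤ ∑ t, p t * M := by
    refine Finset.sum_le_sum fun t _ => ?_
    have hpt : 0 ≤ p t := le_trans (hl0 t) (hp.1 t).1
    exact mul_le_mul_of_nonneg_left (hM t) hpt
  have h3 : ∑ t, p t * M = M := by rw [← Finset.sum_mul, hp.2, one_mul]
  linarith

lemma aux_bdd (l u : S → ℝ) (hl0 : ∀ t, 0 ≤ l t) (v : S → ℝ) :
    BddBelow {x | ∃ p : S → ℝ, ((∀ t, l t ≤ p t ∧ p t ≤ u t) ∧ ∑ t, p t = 1) ∧ x = ∑ t, p t * v t}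
    ∧ BddAbove {x | ∃ p : S → ℝ, ((∀ t, l t ≤ p t ∧ p t ≤ u t) ∧ ∑ t, p t = 1) ∧ x = ∑ t, p t * v t} := by
  constructor
  · refine ⟨-(∑ t, u t * |v t|), ?_⟩
    rintro x ⟨p, hp, rfl⟩
    have : ∀ t ∈ Finset.univ, -(u t * |v t|) ≤ p t * v t := by
      intro t _
      have hpt : 0 ≤ p t := le_trans (hl0 t) (hp.1 t).1
      have hptu : p t ≤ u t := (hp.1 t).2
      have := abs_le.mp (le_refl |v t|) |>.1
      nlinarith [abs_nonneg (v t), neg_abs_le (v t), le_abs_self (v t)]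
    calc -(∑ t, u t * |v t|) = ∑ t, -(u t * |v t|) := by rw [Finset.sum_neg_distrib]
      _ ≤ ∑ t, p t * v t := Finset.sum_le_sum this
  · refine ⟨∑ t, u t * |v t|, ?_⟩
    rintro x ⟨p, hp, rfl⟩
    refine Finset.sum_le_sum fun t _ => ?_
    have hpt : 0 ≤ p t := le_trans (hl0 t) (hp.1 t).1
    have hptu : p t ≤ u t := (hp.1 t).2
    nlinarith [abs_nonneg (v t), neg_abs_le (v t), le_abs_self (v t)]

lemma aux_inf (l u : S → ℝ) (hl0 : ∀ t, 0 ≤ l t) (hlu : ∀ t, l t ≤ u t)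
    (hsl : ∑ t, l t ≤ 1) (hsu : 1 ≤ ∑ t, u t)
    (v w : S → ℝ) (M : ℝ) (hM : ∀ t, v t - w t ≤ M) :
    sInf {x | ∃ p : S → ℝ, ((∀ t, l t ≤ p t ∧ p t ≤ u t) ∧ ∑ t, p t = 1) ∧ x = ∑ t, p t * v t}
    ≤ sInf {x | ∃ p : S → ℝ, ((∀ t, l t ≤ p t ∧ p t ≤ u t) ∧ ∑ t, p t = 1) ∧ x = ∑ t, p t * w t} + M := by
  obtain ⟨p₀, hp₀⟩ := aux_nonempty l u hlu hsl hsu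
  have hne : {x | ∃ p : S → ℝ, ((∀ t, l t ≤ p t ∧ p t ≤ u t) ∧ ∑ t, p t = 1) ∧ x = ∑ t, p t * w t}.Nonempty :=
    ⟨_, p₀, hp₀, rfl⟩
  have key : sInf {x | ∃ p : S → ℝ, ((∀ t, l t ≤ p t ∧ p t ≤ u t) ∧ ∑ t, p t = 1) ∧ x = ∑ t, p t * v t} - M
      ≤ sInf {x | ∃ p : S → ℝ, ((∀ t, l t ≤ p t ∧ p t ≤ u t) ∧ ∑ t, p t = 1) ∧ x = ∑ t, p t * w t} := by
    refine le_csInf hne fun y hy => ?_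
    obtain ⟨p, hp, rfl⟩ := hy
    have h1 : sInf {x | ∃ p : S → ℝ, ((∀ t, l t ≤ p t ∧ p t ≤ u t) ∧ ∑ t, p t = 1) ∧ x = ∑ t, p t * v t} ≤ ∑ t, p t * v t :=
      csInf_le (aux_bdd l u hl0 v).1 ⟨p, hp, rfl⟩
    have h2 := aux_est l u hl0 v w M hM p hp
    linarith
  linarith

lemma aux_sup (l u : S → ℝ) (hl0 : ∀ t, 0 ≤ l t) (hlu : ∀ t, l t ≤ u t)
    (hsl : ∑ t, l t ≤ 1) (hsu : 1 ≤ ∑ t, u t)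
    (v w : S → ℝ) (M : ℝ) (hM : ∀ t, v t - w t ≤ M) :
    sSup {x | ∃ p : S → ℝ, ((∀ t, l t ≤ p t ∧ p t ≤ u t) ∧ ∑ t, p t = 1) ∧ x = ∑ t, p t * v t}
    ≤ sSup {x | ∃ p : S → ℝ, ((∀ t, l t ≤ p t ∧ p t ≤ u t) ∧ ∑ t, p t = 1) ∧ x = ∑ t, p t * w t} + M := by
  obtain ⟨p₀, hp₀⟩ := aux_nonempty l u hlu hsl hsu
  have hne : {x | ∃ p : S → ℝ, ((∀ t, l t ≤ p t ∧ p t ≤ u t) ∧ ∑ t, p t = 1) ∧ x = ∑ t, p t * v t}.Nonempty :=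
    ⟨_, p₀, hp₀, rfl⟩
  refine csSup_le hne fun x hx => ?_
  obtain ⟨p, hp, rfl⟩ := hx
  have h1 : ∑ t, p t * w t ≤ sSup {x | ∃ p : S → ℝ, ((∀ t, l t ≤ p t ∧ p t ≤ u t) ∧ ∑ t, p t = 1) ∧ x = ∑ t, p t * w t} :=
    le_csSup (aux_bdd l u hl0 w).2 ⟨p, hp, rfl⟩
  have h2 := aux_est l u hl0 v w M hM p hp
  linarith

end Aux

theorem stmt_3 (S : Type) [Fintype S] [Nonempty S]
    (γ : ℝ) (hγ0 : 0 ≤ γ) (hγ1 : γ < 1) (r : S → ℝ)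
    (l u : S → S → ℝ)
    (hl0 : ∀ s t, 0 ≤ l s t) (hlu : ∀ s t, l s t ≤ u s t)
    (hsl : ∀ s, ∑ t, l s t ≤ 1) (hsu : ∀ s, 1 ≤ ∑ t, u s t)
    (Tdown Tup : (S → ℝ) → (S → ℝ))
    (hTdown : ∀ (v : S → ℝ) (s : S), Tdown v s =
      r s + γ * sInf {x | ∃ p : S → ℝ,
        ((∀ t, l s t ≤ p t ∧ p t ≤ u s t) ∧ ∑ t, p t = 1) ∧ x = ∑ t, p t * v t})
    (hTup : ∀ (v : S → ℝ) (s : S), Tup v s =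
      r s + γ * sSup {x | ∃ p : S → ℝ,
        ((∀ t, l s t ≤ p t ∧ p t ≤ u s t) ∧ ∑ t, p t = 1) ∧ x = ∑ t, p t * v t})
    (v w : S → ℝ) :
    (⨆ s, |Tdown v s - Tdown w s|) ≤ γ * (⨆ s, |v s - w s|) ∧
    (⨆ s, |Tup v s - Tup w s|) ≤ γ * (⨆ s, |v s - w s|) := by
  set M := ⨆ s, |v s - w s| with hMdef
  have hbdd : BddAbove (Set.range fun s => |v s - w s|) := (Set.finite_range _).bddAbove
  have hM : ∀ t, |v t - w t| ≤ M := fun t => le_ciSup hbdd t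
  have hM1 : ∀ t, v t - w t ≤ M := fun t => le_trans (le_abs_self _) (hM t)
  have hM2 : ∀ t, w t - v t ≤ M := fun t => le_trans (by rw [abs_sub_comm] at *; exact le_abs_self _) (hM t)
  constructor
  · refine ciSup_le fun s => ?_
    rw [hTdown v s, hTdown w s]
    have h1 := aux_inf (l s) (u s) (hl0 s) (hlu s) (hsl s) (hsu s) v w M hM1
    have h2 := aux_inf (l s) (u s) (hl0 s) (hlu s) (hsl s) (hsu s) w v M hM2
    rw [abs_le]
    constructor <;> nlinarith
  · refine ciSup_le fun s => ?_
    rw [hTup v s, hTup w s]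
    have h1 := aux_sup (l s) (u s) (hl0 s) (hlu s) (hsl s) (hsu s) v w M hM1
    have h2 := aux_sup (l s) (u s) (hl0 s) (hlu s) (hsl s) (hsu s) w v M hM2
    rw [abs_le]
    constructor <;> nlinarith
end

section
/- Let S be a nonempty finite type, γ ∈ ℝ with 0 ≤ γ < 1, r : S → ℝ, and for each s ∈ S let l_s, u_s : S → ℝ satisfy 0 ≤ l_s ≤ u_s componentwise, (∑ t, l_s t) ≤ 1 and 1 ≤ (∑ t, u_s t); set U_s := {p : S → ℝ | (∀ t, l_s t ≤ p t ∧ p t ≤ u_s t) ∧ ∑ t, p t = 1}. Then there exists a unique v↓ : S → ℝ such that for all s, v↓ s = r s + γ * sInf {x | ∃ p ∈ U_s, x = ∑ t, p t * v↓ t}, and there exists a unique v↑ : S → ℝ such that for all s, v↑ s = r s + γ * sSup {x | ∃ p ∈ U_s, x = ∑ t, p t * v↑ t}. -/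
open Finset Function

lemma aux_exists_prob {S : Type} [Fintype S] (l u : S → ℝ) (hl0 : ∀ t, 0 ≤ l t)
    (hlu : ∀ t, l t ≤ u t) (hsl : ∑ t, l t ≤ 1) (hsu : 1 ≤ ∑ t, u t) :
    ∃ p : S → ℝ, (∀ t, l t ≤ p t ∧ p t ≤ u t) ∧ ∑ t, p t = 1 := by
  set C := ∑ t, (u t - l t) with hC
  have hC0 : (0:ℝ) ≤ C := Finset.sum_nonneg fun t _ => by linarith [hlu t]
  have hcont : Continuous fun c : ℝ => ∑ t, (l t + min c (u t - l t)) := by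
    apply continuous_finset_sum
    intro t _
    exact continuous_const.add ((continuous_id.min continuous_const))
  have h0 : (∑ t, (l t + min (0:ℝ) (u t - l t))) = ∑ t, l t := by
    refine Finset.sum_congr rfl fun t _ => ?_
    rw [min_eq_left (by linarith [hlu t])]; ring
  have hCval : (∑ t, (l t + min C (u t - l t))) = ∑ t, u t := by
    refine Finset.sum_congr rfl fun t _ => ?_
    rw [min_eq_right]; · ring
    exact Finset.single_le_sum (f := fun t => u t - l t)
      (fun t _ => sub_nonneg.mpr (hlu t)) (Finset.mem_univ t)
  have hIVT := intermediate_value_Icc hC0 hcont.continuousOn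
  have hmem : (1:ℝ) ∈ Set.Icc ((fun c : ℝ => ∑ t, (l t + min c (u t - l t))) 0)
      ((fun c : ℝ => ∑ t, (l t + min c (u t - l t))) C) := by
    simp only [h0, hCval]
    exact ⟨hsl, hsu⟩
  obtain ⟨c, hc, hceq⟩ := hIVT hmem
  refine ⟨fun t => l t + min c (u t - l t), fun t => ⟨?_, ?_⟩, hceq⟩
  · show l t ≤ l t + min c (u t - l t)
    have : (0:ℝ) ≤ min c (u t - l t) := le_min hc.1 (by linarith [hlu t])
    linarith
  · show l t + min c (u t - l t) ≤ u t
    have := min_le_right c (u t - l t); linarith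

lemma aux_sum_dist {S : Type} [Fintype S] (p v w : S → ℝ) (hp0 : ∀ t, 0 ≤ p t)
    (hp1 : ∑ t, p t = 1) :
    |(∑ t, p t * v t) - ∑ t, p t * w t| ≤ dist v w := by
  rw [← Finset.sum_sub_distrib]
  calc |∑ t, (p t * v t - p t * w t)| ≤ ∑ t, |p t * v t - p t * w t| :=
        Finset.abs_sum_le_sum_abs _ _
    _ = ∑ t, p t * |v t - w t| := by
        refine Finset.sum_congr rfl fun t _ => ?_
        rw [← mul_sub, abs_mul, abs_of_nonneg (hp0 t)]
    _ ≤ ∑ t, p t * dist v w := by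
        refine Finset.sum_le_sum fun t _ => ?_
        refine mul_le_mul_of_nonneg_left ?_ (hp0 t)
        rw [← Real.dist_eq]; exact dist_le_pi_dist v w t
    _ = dist v w := by rw [← Finset.sum_mul, hp1, one_mul]

theorem stmt_4 (S : Type) [Fintype S] [Nonempty S]
    (γ : ℝ) (hγ0 : 0 ≤ γ) (hγ1 : γ < 1) (r : S → ℝ)
    (l u : S → S → ℝ)
    (hl0 : ∀ s t, 0 ≤ l s t) (hlu : ∀ s t, l s t ≤ u s t)
    (hsl : ∀ s, ∑ t, l s t ≤ 1) (hsu : ∀ s, 1 ≤ ∑ t, u s t) :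
    (∃! vd : S → ℝ, ∀ s, vd s =
      r s + γ * sInf {x | ∃ p : S → ℝ,
        ((∀ t, l s t ≤ p t ∧ p t ≤ u s t) ∧ ∑ t, p t = 1) ∧ x = ∑ t, p t * vd t}) ∧
    (∃! vu : S → ℝ, ∀ s, vu s =
      r s + γ * sSup {x | ∃ p : S → ℝ,
        ((∀ t, l s t ≤ p t ∧ p t ≤ u s t) ∧ ∑ t, p t = 1) ∧ x = ∑ t, p t * vu t}) := by
  classical
  -- the uncertainty sets and their images
  set U : S → Set (S → ℝ) :=
    fun s => {p | (∀ t, l s t ≤ p t ∧ p t ≤ u s t) ∧ ∑ t, p t = 1} with hU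
  have hUne : ∀ s, ∃ p, p ∈ U s := fun s =>
    aux_exists_prob (l s) (u s) (hl0 s) (hlu s) (hsl s) (hsu s)
  set A : S → (S → ℝ) → Set ℝ :=
    fun s v => {x | ∃ p : S → ℝ, p ∈ U s ∧ x = ∑ t, p t * v t} with hA
  have hAset : ∀ s (v : S → ℝ),
      {x | ∃ p : S → ℝ, ((∀ t, l s t ≤ p t ∧ p t ≤ u s t) ∧ ∑ t, p t = 1)
        ∧ x = ∑ t, p t * v t} = A s v := fun s v => rfl
  have hp0 : ∀ s (p : S → ℝ), p ∈ U s → ∀ t, 0 ≤ p t :=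
    fun s p hp t => le_trans (hl0 s t) (hp.1 t).1
  have hAne : ∀ s v, (A s v).Nonempty := by
    intro s v
    obtain ⟨p, hp⟩ := hUne s
    exact ⟨∑ t, p t * v t, p, hp, rfl⟩
  have hbound : ∀ s v x, x ∈ A s v → |x| ≤ dist v 0 := by
    intro s v x ⟨p, hp, hx⟩
    have := aux_sum_dist p v 0 (hp0 s p hp) hp.2
    simpa [hx] using this
  have hbdd_below : ∀ s v, BddBelow (A s v) := by
    intro s v
    exact ⟨-(dist v 0), fun x hx => neg_le_of_abs_le (hbound s v x hx)⟩
  have hbdd_above : ∀ s v, BddAbove (A s v) := by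
    intro s v
    exact ⟨dist v 0, fun x hx => le_of_abs_le (hbound s v x hx)⟩
  -- key one-sided estimates
  have hInf_le : ∀ s (v w : S → ℝ), sInf (A s v) ≤ sInf (A s w) + dist v w := by
    intro s v w
    rw [← sub_le_iff_le_add]
    refine le_csInf (hAne s w) fun x ⟨p, hp, hx⟩ => ?_
    have h1 : sInf (A s v) ≤ ∑ t, p t * v t :=
      csInf_le (hbdd_below s v) ⟨p, hp, rfl⟩
    have h2 := aux_sum_dist p v w (hp0 s p hp) hp.2
    rw [abs_sub_le_iff] at h2
    have := h2.1
    rw [hx]; linarith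
  have hSup_le : ∀ s (v w : S → ℝ), sSup (A s v) ≤ sSup (A s w) + dist v w := by
    intro s v w
    refine csSup_le (hAne s v) fun x ⟨p, hp, hx⟩ => ?_
    have h1 : ∑ t, p t * w t ≤ sSup (A s w) :=
      le_csSup (hbdd_above s w) ⟨p, hp, rfl⟩
    have h2 := aux_sum_dist p v w (hp0 s p hp) hp.2
    rw [abs_sub_le_iff] at h2
    have := h2.1
    rw [hx]; linarith
  -- the two Bellman operators
  set Td : (S → ℝ) → (S → ℝ) := fun v s => r s + γ * sInf (A s v) with hTd
  set Tu : (S → ℝ) → (S → ℝ) := fun v s => r s + γ * sSup (A s v) with hTu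
  set K : NNReal := ⟨γ, hγ0⟩ with hK
  have hK1 : K < 1 := by exact_mod_cast hγ1
  have hKc : (K : ℝ) = γ := rfl
  have hLip : ∀ (T : (S → ℝ) → (S → ℝ)),
      (∀ v w s, |T v s - T w s| ≤ γ * dist v w) → ContractingWith K T := by
    intro T hT
    refine ⟨hK1, LipschitzWith.of_dist_le_mul fun v w => ?_⟩
    rw [hKc]
    rw [dist_pi_le_iff (by positivity)]
    intro s
    rw [Real.dist_eq]
    exact hT v w s
  have hcd : ContractingWith K Td := by
    refine hLip Td fun v w s => ?_
    have h1 := hInf_le s v w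
    have h2 := hInf_le s w v
    rw [dist_comm] at h2
    have habs : |sInf (A s v) - sInf (A s w)| ≤ dist v w :=
      abs_sub_le_iff.mpr ⟨by linarith, by linarith⟩
    calc |Td v s - Td w s| = γ * |sInf (A s v) - sInf (A s w)| := by
          rw [hTd]; simp only
          rw [add_sub_add_left_eq_sub, ← mul_sub, abs_mul, abs_of_nonneg hγ0]
      _ ≤ γ * dist v w := mul_le_mul_of_nonneg_left habs hγ0
  have hcu : ContractingWith K Tu := by
    refine hLip Tu fun v w s => ?_
    have h1 := hSup_le s v w
    have h2 := hSup_le s w v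
    rw [dist_comm] at h2
    have habs : |sSup (A s v) - sSup (A s w)| ≤ dist v w :=
      abs_sub_le_iff.mpr ⟨by linarith, by linarith⟩
    calc |Tu v s - Tu w s| = γ * |sSup (A s v) - sSup (A s w)| := by
          rw [hTu]; simp only
          rw [add_sub_add_left_eq_sub, ← mul_sub, abs_mul, abs_of_nonneg hγ0]
      _ ≤ γ * dist v w := mul_le_mul_of_nonneg_left habs hγ0
  constructor
  · refine ⟨hcd.fixedPoint Td, ?_, ?_⟩
    · intro s
      have := hcd.fixedPoint_isFixedPt
      conv_lhs => rw [← this]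
      rw [hAset]
    · intro w hw
      have : IsFixedPt Td w := funext fun s => (hw s).symm
      exact hcd.fixedPoint_unique this
  · refine ⟨hcu.fixedPoint Tu, ?_, ?_⟩
    · intro s
      have := hcu.fixedPoint_isFixedPt
      conv_lhs => rw [← this]
      rw [hAset]
    · intro w hw
      have : IsFixedPt Tu w := funext fun s => (hw s).symm
      exact hcu.fixedPoint_unique this
end

section
/- Let S be a nonempty finite type, let P : Matrix S S ℝ be row-stochastic (all entries nonnegative and every row sums to 1), let γ ∈ ℝ with 0 ≤ γ < 1, and let r : S → ℝ. Then there exists a unique v : S → ℝ with v = r + γ • P.mulVec v, i.e., v s = r s + γ * ∑ t, P s t * v t for all s. -/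
theorem stmt_5 (S : Type) [Fintype S] [Nonempty S]
    (P : Matrix S S ℝ)
    (hP0 : ∀ s t, 0 ≤ P s t) (hP1 : ∀ s, ∑ t, P s t = 1)
    (γ : ℝ) (hγ0 : 0 ≤ γ) (hγ1 : γ < 1) (r : S → ℝ) :
    ∃! v : S → ℝ, v = r + γ • P.mulVec v := by
  set K : NNReal := ⟨γ, hγ0⟩ with hKdef
  have hK : K < 1 := by exact_mod_cast hγ1
  set f : (S → ℝ) → (S → ℝ) := fun v => r + γ • P.mulVec v with hfdef
  have hlip : LipschitzWith K f := by
    apply LipschitzWith.of_dist_le_mul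
    intro v w
    have hKnn : (0:ℝ) ≤ (K:ℝ) * dist v w := by positivity
    rw [dist_pi_le_iff hKnn]
    intro s
    have h1 : f v s - f w s = γ * ∑ t, P s t * (v t - w t) := by
      simp only [hfdef, Pi.add_apply, Pi.smul_apply, Matrix.mulVec, dotProduct,
        smul_eq_mul]
      rw [Finset.mul_sum, Finset.mul_sum, Finset.mul_sum, add_sub_add_left_eq_sub,
        ← Finset.sum_sub_distrib]
      exact Finset.sum_congr rfl fun t _ => by ring
    rw [Real.dist_eq, h1, abs_mul, abs_of_nonneg hγ0]
    have : |∑ t, P s t * (v t - w t)| ≤ dist v w := by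
      calc |∑ t, P s t * (v t - w t)| ≤ ∑ t, |P s t * (v t - w t)| :=
            Finset.abs_sum_le_sum_abs _ _
        _ ≤ ∑ t, P s t * dist v w := by
            apply Finset.sum_le_sum
            intro t _
            rw [abs_mul, abs_of_nonneg (hP0 s t)]
            exact mul_le_mul_of_nonneg_left
              ((Real.dist_eq (v t) (w t)) ▸ dist_le_pi_dist v w t) (hP0 s t)
        _ = dist v w := by rw [← Finset.sum_mul, hP1, one_mul]
    calc γ * |∑ t, P s t * (v t - w t)| ≤ γ * dist v w :=
          mul_le_mul_of_nonneg_left this hγ0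
      _ = (K:ℝ) * dist v w := rfl
  have hc : ContractingWith K f := ⟨hK, hlip⟩
  refine ⟨hc.fixedPoint f, ?_, ?_⟩
  · have := hc.fixedPoint_isFixedPt
    exact this.symm
  · intro y hy
    exact hc.fixedPoint_unique hy.symm
end

section
/- Let S be a nonempty finite type, γ ∈ ℝ with 0 ≤ γ < 1, and for each s ∈ S let l_s, u_s : S → ℝ satisfy 0 ≤ l_s ≤ u_s componentwise, (∑ t, l_s t) ≤ 1 and 1 ≤ (∑ t, u_s t); set U_s := {p : S → ℝ | (∀ t, l_s t ≤ p t ∧ p t ≤ u_s t) ∧ ∑ t, p t = 1}. Let r↓, r, r↑ : S → ℝ with r↓ ≤ r ≤ r↑ componentwise, and let P : Matrix S S ℝ be a matrix whose row P s belongs to U_s for every s. Suppose v↓ : S → ℝ satisfies v↓ s = r↓ s + γ * sInf {x | ∃ p ∈ U_s, x = ∑ t, p t * v↓ t} for all s, v↑ : S → ℝ satisfies v↑ s = r↑ s + γ * sSup {x | ∃ p ∈ U_s, x = ∑ t, p t * v↑ t} for all s, and v : S → ℝ satisfies v s = r s + γ * ∑ t, P s t * v t for all s. Then v↓ ≤ v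 ≤ v↑ componentwise. -/
lemma wavg_le {S : Type} [Fintype S] [Nonempty S] (p f : S → ℝ)
    (hp : ∀ t, 0 ≤ p t) (hs : ∑ t, p t = 1) :
    ∑ t, p t * f t ≤ Finset.univ.sup' Finset.univ_nonempty f := by
  calc ∑ t, p t * f t
      ≤ ∑ t, p t * Finset.univ.sup' Finset.univ_nonempty f :=
        Finset.sum_le_sum fun t _ =>
          mul_le_mul_of_nonneg_left (Finset.le_sup' f (Finset.mem_univ t)) (hp t)
    _ = Finset.univ.sup' Finset.univ_nonempty f := by rw [← Finset.sum_mul, hs, one_mul]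

lemma wavg_ge {S : Type} [Fintype S] [Nonempty S] (p f : S → ℝ)
    (hp : ∀ t, 0 ≤ p t) (hs : ∑ t, p t = 1) :
    Finset.univ.inf' Finset.univ_nonempty f ≤ ∑ t, p t * f t := by
  calc Finset.univ.inf' Finset.univ_nonempty f
      = ∑ t, p t * Finset.univ.inf' Finset.univ_nonempty f := by
        rw [← Finset.sum_mul, hs, one_mul]
    _ ≤ ∑ t, p t * f t :=
        Finset.sum_le_sum fun t _ =>
          mul_le_mul_of_nonneg_left (Finset.inf'_le f (Finset.mem_univ t)) (hp t)

theorem stmt_6 (S : Type) [Fintype S] [Nonempty S]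
    (γ : ℝ) (hγ0 : 0 ≤ γ) (hγ1 : γ < 1)
    (l u : S → S → ℝ)
    (hl0 : ∀ s t, 0 ≤ l s t) (hlu : ∀ s t, l s t ≤ u s t)
    (hsl : ∀ s, ∑ t, l s t ≤ 1) (hsu : ∀ s, 1 ≤ ∑ t, u s t)
    (rlo r rhi : S → ℝ) (hrlo : ∀ s, rlo s ≤ r s) (hrhi : ∀ s, r s ≤ rhi s)
    (P : Matrix S S ℝ)
    (hP : ∀ s, (∀ t, l s t ≤ P s t ∧ P s t ≤ u s t) ∧ ∑ t, P s t = 1)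
    (vd vu v : S → ℝ)
    (hvd : ∀ s, vd s = rlo s + γ * sInf {x | ∃ p : S → ℝ,
      ((∀ t, l s t ≤ p t ∧ p t ≤ u s t) ∧ ∑ t, p t = 1) ∧ x = ∑ t, p t * vd t})
    (hvu : ∀ s, vu s = rhi s + γ * sSup {x | ∃ p : S → ℝ,
      ((∀ t, l s t ≤ p t ∧ p t ≤ u s t) ∧ ∑ t, p t = 1) ∧ x = ∑ t, p t * vu t})
    (hv : ∀ s, v s = r s + γ * ∑ t, P s t * v t) :
    (∀ s, vd s ≤ v s) ∧ (∀ s, v s ≤ vu s) := by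
  have hPnn : ∀ s t, 0 ≤ P s t := fun s t => le_trans (hl0 s t) ((hP s).1 t).1
  constructor
  · -- vd ≤ v
    set M := Finset.univ.sup' Finset.univ_nonempty (fun s => vd s - v s) with hM
    obtain ⟨s0, -, hs0⟩ := Finset.exists_mem_eq_sup' Finset.univ_nonempty
      (fun s => vd s - v s)
    have hInf_le : sInf {x | ∃ p : S → ℝ,
        ((∀ t, l s0 t ≤ p t ∧ p t ≤ u s0 t) ∧ ∑ t, p t = 1) ∧ x = ∑ t, p t * vd t}
        ≤ ∑ t, P s0 t * vd t := by
      apply csInf_le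
      · refine ⟨Finset.univ.inf' Finset.univ_nonempty vd, ?_⟩
        rintro x ⟨p, ⟨hpb, hps⟩, rfl⟩
        exact wavg_ge p vd (fun t => le_trans (hl0 s0 t) (hpb t).1) hps
      · exact ⟨P s0, hP s0, rfl⟩
    have hstep : M ≤ γ * M := by
      have h1 : vd s0 - v s0 ≤ γ * (∑ t, P s0 t * vd t - ∑ t, P s0 t * v t) := by
        rw [hvd s0, hv s0]
        have := hrlo s0
        nlinarith [hInf_le]
      have h2 : ∑ t, P s0 t * vd t - ∑ t, P s0 t * v t ≤ M := by
        have : ∑ t, P s0 t * vd t - ∑ t, P s0 t * v t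
            = ∑ t, P s0 t * (vd t - v t) := by
          rw [← Finset.sum_sub_distrib]; congr 1; ext t; ring
        rw [this]
        exact wavg_le (P s0) (fun t => vd t - v t) (hPnn s0) (hP s0).2
      calc M = vd s0 - v s0 := hs0
        _ ≤ γ * (∑ t, P s0 t * vd t - ∑ t, P s0 t * v t) := h1
        _ ≤ γ * M := mul_le_mul_of_nonneg_left h2 hγ0
    have hM0 : M ≤ 0 := by nlinarith
    intro s
    have := Finset.le_sup' (fun s => vd s - v s) (Finset.mem_univ s)
    linarith [le_trans this hM0]
  · -- v ≤ vu
    set M := Finset.univ.sup' Finset.univ_nonempty (fun s => v s - vu s) with hM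
    obtain ⟨s0, -, hs0⟩ := Finset.exists_mem_eq_sup' Finset.univ_nonempty
      (fun s => v s - vu s)
    have hSup_ge : ∑ t, P s0 t * vu t ≤ sSup {x | ∃ p : S → ℝ,
        ((∀ t, l s0 t ≤ p t ∧ p t ≤ u s0 t) ∧ ∑ t, p t = 1) ∧ x = ∑ t, p t * vu t} := by
      apply le_csSup
      · refine ⟨Finset.univ.sup' Finset.univ_nonempty vu, ?_⟩
        rintro x ⟨p, ⟨hpb, hps⟩, rfl⟩
        exact wavg_le p vu (fun t => le_trans (hl0 s0 t) (hpb t).1) hps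
      · exact ⟨P s0, hP s0, rfl⟩
    have hstep : M ≤ γ * M := by
      have h1 : v s0 - vu s0 ≤ γ * (∑ t, P s0 t * v t - ∑ t, P s0 t * vu t) := by
        rw [hvu s0, hv s0]
        have := hrhi s0
        nlinarith [hSup_ge]
      have h2 : ∑ t, P s0 t * v t - ∑ t, P s0 t * vu t ≤ M := by
        have : ∑ t, P s0 t * v t - ∑ t, P s0 t * vu t
            = ∑ t, P s0 t * (v t - vu t) := by
          rw [← Finset.sum_sub_distrib]; congr 1; ext t; ring
        rw [this]
        exact wavg_le (P s0) (fun t => v t - vu t) (hPnn s0) (hP s0).2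
      calc M = v s0 - vu s0 := hs0
        _ ≤ γ * (∑ t, P s0 t * v t - ∑ t, P s0 t * vu t) := h1
        _ ≤ γ * M := mul_le_mul_of_nonneg_left h2 hγ0
    have hM0 : M ≤ 0 := by nlinarith
    intro s
    have := Finset.le_sup' (fun s => v s - vu s) (Finset.mem_univ s)
    linarith [le_trans this hM0]
end

section
/- Let S be a nonempty finite type, A a finite type of actions, γ ∈ ℝ with 0 ≤ γ < 1. For each a ∈ A and s ∈ S let l^a_s, u^a_s : S → ℝ satisfy 0 ≤ l^a_s ≤ u^a_s componentwise, (∑ t, l^a_s t) ≤ 1 and 1 ≤ (∑ t, u^a_s t), set U^a_s := {p : S → ℝ | (∀ t, l^a_s t ≤ p t ∧ p t ≤ u^a_s t) ∧ ∑ t, p t = 1}, and let r^a : S → ℝ. For a pure policy π : S → A let v↓(π) : S → ℝ be the unique solution of v s = r^{π s} s + γ * sInf {x | ∃ p ∈ U^{π s}_s, x = ∑ t, p t * v t} for all s. Let s₀ ∈ S and a ∈ A satisfy r^a s₀ + γ * sInf {x | ∃ p ∈ U^a_{s₀}, x = ∑ t, p t * v↓(π) t} ≥ v↓(π) s₀,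 and set π' := Function.update π s₀ a. Then v↓(π') s ≥ v↓(π) s for all s; moreover, if the hypothesis inequality is strict, then v↓(π') s₀ > v↓(π) s₀. -/
/-! The worst-case expectation `inf_{p ∈ U} ∑ t, p t * v t` is monotone in `v` and moves by `c`
when `v` moves by the constant `c`. Let `m` be the minimum of `v↓(π') - v↓(π)`. Since `π'` agrees
with `π` off `s₀` and is no worse at `s₀`, one application of the Bellman equation of `π'` gives
`v↓(π') ≥ v↓(π) + γ m`; at the minimiser this reads `m ≥ γ m`, so `m ≥ 0` as `γ < 1`. Strictness
at `s₀` follows from one more application at `s₀`. -/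

open Finset

section IntervalSimplex

variable {S : Type} [Fintype S]

def intervalSimplex (l u : S → ℝ) : Set (S → ℝ) :=
  {p | (∀ t, l t ≤ p t ∧ p t ≤ u t) ∧ ∑ t, p t = 1}

noncomputable def worstCaseExpectation (l u v : S → ℝ) : ℝ :=
  sInf {x | ∃ p ∈ intervalSimplex l u, x = ∑ t, p t * v t}

theorem intervalSimplex_nonempty {l u : S → ℝ} (hlu : ∀ t, l t ≤ u t) (hsl : ∑ t, l t ≤ 1)
    (hsu : 1 ≤ ∑ t, u t) : (intervalSimplex l u).Nonempty := by
  rcases (sum_le_sum fun t _ => hlu t).eq_or_lt with h | h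
  · exact ⟨l, fun t => ⟨le_rfl, hlu t⟩, le_antisymm hsl (h ▸ hsu)⟩
  -- the point of the segment from `l` to `u` whose coordinates sum to `1`
  set θ := (1 - ∑ t, l t) / (∑ t, u t - ∑ t, l t)
  have hd : 0 < ∑ t, u t - ∑ t, l t := sub_pos.2 h
  have hθ0 : 0 ≤ θ := div_nonneg (sub_nonneg.2 hsl) hd.le
  have hθ1 : θ ≤ 1 := (div_le_one hd).2 (by linarith)
  refine ⟨fun t => l t + θ * (u t - l t), fun t => ⟨?_, ?_⟩, ?_⟩
  · nlinarith [hlu t]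
  · nlinarith [hlu t]
  · have hθ : θ * (∑ t, u t - ∑ t, l t) = 1 - ∑ t, l t := div_mul_cancel₀ _ hd.ne'
    rw [sum_add_distrib, ← mul_sum, sum_sub_distrib, hθ]
    ring

theorem sum_mul_add_le_sum_mul {p v w : S → ℝ} {c : ℝ} (hp0 : ∀ t, 0 ≤ p t)
    (hp1 : ∑ t, p t = 1) (h : ∀ t, v t + c ≤ w t) : ∑ t, p t * v t + c ≤ ∑ t, p t * w t :=
  calc ∑ t, p t * v t + c = ∑ t, p t * (v t + c) := by
        simp only [mul_add, sum_add_distrib, ← sum_mul, hp1, one_mul]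
    _ ≤ ∑ t, p t * w t := sum_le_sum fun t _ => mul_le_mul_of_nonneg_left (h t) (hp0 t)

variable {l u : S → ℝ} (hl0 : ∀ t, 0 ≤ l t)
include hl0

theorem iInf_le_sum_mul_of_mem_intervalSimplex {p v : S → ℝ} (hp : p ∈ intervalSimplex l u) :
    ⨅ t, v t ≤ ∑ t, p t * v t := by
  simpa using sum_mul_add_le_sum_mul (v := 0) (c := ⨅ t, v t) (fun t => (hl0 t).trans (hp.1 t).1)
    hp.2 fun t => by simpa using ciInf_le (Finite.bddBelow_range v) t

variable (hlu : ∀ t, l t ≤ u t) (hsl : ∑ t, l t ≤ 1) (hsu : 1 ≤ ∑ t, u t)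
include hlu hsl hsu

theorem worstCaseExpectation_add_le {v w : S → ℝ} {c : ℝ} (h : ∀ t, v t + c ≤ w t) :
    worstCaseExpectation l u v + c ≤ worstCaseExpectation l u w := by
  unfold worstCaseExpectation
  have hbdd : BddBelow {x | ∃ p ∈ intervalSimplex l u, x = ∑ t, p t * v t} :=
    ⟨⨅ t, v t, by rintro _ ⟨p, hp, rfl⟩; exact iInf_le_sum_mul_of_mem_intervalSimplex hl0 hp⟩
  obtain ⟨q, hq⟩ := intervalSimplex_nonempty hlu hsl hsu
  refine le_csInf ⟨_, q, hq, rfl⟩ ?_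
  rintro x ⟨p, hp, rfl⟩
  refine (add_le_add_left (csInf_le hbdd ⟨p, hp, rfl⟩) c).trans ?_
  exact sum_mul_add_le_sum_mul (fun t => (hl0 t).trans (hp.1 t).1) hp.2 h

end IntervalSimplex

theorem le_of_forall_add_le_imp_add_mul_le {S : Type} [Finite S] [Nonempty S] {γ : ℝ}
    (hγ : γ < 1) {v w : S → ℝ} (h : ∀ c, (∀ t, v t + c ≤ w t) → ∀ s, v s + γ * c ≤ w s)
    (s : S) : v s ≤ w s := by
  obtain ⟨s₁, hs₁⟩ := Finite.exists_min fun t => w t - v t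
  have := h (w s₁ - v s₁) (fun t => by linarith [hs₁ t]) s₁
  nlinarith [hs₁ s]

theorem stmt_8_general (S A : Type) [Fintype S] [Nonempty S] [DecidableEq S]
    (γ : ℝ) (hγ0 : 0 ≤ γ) (hγ1 : γ < 1)
    (l u : A → S → S → ℝ)
    (hl0 : ∀ a s t, 0 ≤ l a s t) (hlu : ∀ a s t, l a s t ≤ u a s t)
    (hsl : ∀ a s, ∑ t, l a s t ≤ 1) (hsu : ∀ a s, 1 ≤ ∑ t, u a s t)
    (r : A → S → ℝ)
    (π : S → A) (s₀ : S) (a : A)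
    (vd vd' : S → ℝ)
    (hvd : ∀ s, vd s = r (π s) s + γ * sInf {x | ∃ p : S → ℝ,
      ((∀ t, l (π s) s t ≤ p t ∧ p t ≤ u (π s) s t) ∧ ∑ t, p t = 1) ∧ x = ∑ t, p t * vd t})
    (hvd' : ∀ s, vd' s = r (Function.update π s₀ a s) s + γ * sInf {x | ∃ p : S → ℝ,
      ((∀ t, l (Function.update π s₀ a s) s t ≤ p t ∧ p t ≤ u (Function.update π s₀ a s) s t) ∧
        ∑ t, p t = 1) ∧ x = ∑ t, p t * vd' t})
    (hadv : r a s₀ + γ * sInf {x | ∃ p : S → ℝ,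
      ((∀ t, l a s₀ t ≤ p t ∧ p t ≤ u a s₀ t) ∧ ∑ t, p t = 1) ∧ x = ∑ t, p t * vd t} ≥ vd s₀) :
    (∀ s, vd' s ≥ vd s) ∧
    (r a s₀ + γ * sInf {x | ∃ p : S → ℝ,
      ((∀ t, l a s₀ t ≤ p t ∧ p t ≤ u a s₀ t) ∧ ∑ t, p t = 1) ∧ x = ∑ t, p t * vd t} > vd s₀ →
      vd' s₀ > vd s₀) := by
  set π' := Function.update π s₀ a
  let W b s := worstCaseExpectation (l b s) (u b s)
  have hvd' : ∀ s, vd' s = r (π' s) s + γ * W (π' s) s vd' := hvd'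
  have hvd : ∀ s, vd s = r (π s) s + γ * W (π s) s vd := hvd
  have hadv : vd s₀ ≤ r a s₀ + γ * W a s₀ vd := hadv
  have improves : ∀ s, vd s ≤ r (π' s) s + γ * W (π' s) s vd := by
    intro s
    rcases eq_or_ne s s₀ with rfl | hs
    · simpa only [π', Function.update_self] using hadv
    · simpa only [π', Function.update_of_ne hs] using (hvd s).le
  have bellman_shift : ∀ c, (∀ t, vd t + c ≤ vd' t) →
      ∀ s, r (π' s) s + γ * W (π' s) s vd + γ * c ≤ vd' s := fun c hc s => by
    have := mul_le_mul_of_nonneg_left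
      (worstCaseExpectation_add_le (hl0 (π' s) s) (hlu _ s) (hsl _ s) (hsu _ s) hc) hγ0
    linarith [hvd' s, mul_add γ (W (π' s) s vd) c]
  have mono : ∀ s, vd s ≤ vd' s := le_of_forall_add_le_imp_add_mul_le hγ1 fun c hc s => by
    linarith [bellman_shift c hc s, improves s]
  refine ⟨mono, fun hstrict => ?_⟩
  have hstrict : vd s₀ < r a s₀ + γ * W a s₀ vd := hstrict
  have := bellman_shift 0 (fun t => by linarith [mono t]) s₀
  simp only [π', Function.update_self, mul_zero, add_zero] at this
  linarith

theorem stmt_8 (S A : Type) [Fintype S] [Nonempty S] [DecidableEq S] [Fintype A]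
    (γ : ℝ) (hγ0 : 0 ≤ γ) (hγ1 : γ < 1)
    (l u : A → S → S → ℝ)
    (hl0 : ∀ a s t, 0 ≤ l a s t) (hlu : ∀ a s t, l a s t ≤ u a s t)
    (hsl : ∀ a s, ∑ t, l a s t ≤ 1) (hsu : ∀ a s, 1 ≤ ∑ t, u a s t)
    (r : A → S → ℝ)
    (π : S → A) (s₀ : S) (a : A)
    (vd vd' : S → ℝ)
    (hvd : ∀ s, vd s = r (π s) s + γ * sInf {x | ∃ p : S → ℝ,
      ((∀ t, l (π s) s t ≤ p t ∧ p t ≤ u (π s) s t) ∧ ∑ t, p t = 1) ∧ x = ∑ t, p t * vd t})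
    (hvd' : ∀ s, vd' s = r (Function.update π s₀ a s) s + γ * sInf {x | ∃ p : S → ℝ,
      ((∀ t, l (Function.update π s₀ a s) s t ≤ p t ∧ p t ≤ u (Function.update π s₀ a s) s t) ∧
        ∑ t, p t = 1) ∧ x = ∑ t, p t * vd' t})
    (hadv : r a s₀ + γ * sInf {x | ∃ p : S → ℝ,
      ((∀ t, l a s₀ t ≤ p t ∧ p t ≤ u a s₀ t) ∧ ∑ t, p t = 1) ∧ x = ∑ t, p t * vd t} ≥ vd s₀) :
    (∀ s, vd' s ≥ vd s) ∧
    (r a s₀ + γ * sInf {x | ∃ p : S → ℝ,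
      ((∀ t, l a s₀ t ≤ p t ∧ p t ≤ u a s₀ t) ∧ ∑ t, p t = 1) ∧ x = ∑ t, p t * vd t} > vd s₀ →
      vd' s₀ > vd s₀) :=
  stmt_8_general S A γ hγ0 hγ1 l u hl0 hlu hsl hsu r π s₀ a vd vd' hvd hvd' hadv
end

section
/- In the bounded-parameter MDP setting with value triple V, let π, π' : S → A be pure policies and suppose π' is Pareto optimal, i.e., there is no pure policy σ with V(σ) >_P V(π'). Then there exist N ≤ Fintype.card S and a finite sequence of pure policies π = π₀, π₁, …, π_N = π' such that for every i < N, d(π_i, π_{i+1}) = 1 and ¬(V(π_i) >_P V(π_{i+1})). -/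
open Finset
open Finset

/-- One-sided Lipschitz contraction comparison lemma. -/
lemma bpmdp_comp {S : Type} [Fintype S] [Nonempty S] (γ : ℝ) (hγ0 : 0 ≤ γ) (hγ1 : γ < 1)
    (r : S → ℝ) (f : S → (S → ℝ) → ℝ)
    (hf : ∀ v w s, f s v - f s w ≤ Finset.univ.sup' Finset.univ_nonempty (fun t => v t - w t))
    (x y : S → ℝ)
    (hx : ∀ s, x s ≤ r s + γ * f s x) (hy : ∀ s, r s + γ * f s y ≤ y s) :
    ∀ s, x s ≤ y s := by
  set L := Finset.univ.sup' Finset.univ_nonempty (fun t => x t - y t) with hL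
  obtain ⟨s0, -, hs0⟩ := Finset.exists_mem_eq_sup' Finset.univ_nonempty (fun t => x t - y t)
  have h3 : γ * (f s0 x - f s0 y) ≤ γ * L := mul_le_mul_of_nonneg_left (hf x y s0) hγ0
  have h1 : L ≤ γ * L := by
    have := hx s0; have := hy s0
    rw [← hL] at hs0
    nlinarith
  have hL0 : L ≤ 0 := by nlinarith
  intro s
  have : x s - y s ≤ L := by rw [hL]; exact Finset.le_sup' (fun t => x t - y t) (Finset.mem_univ s)
  linarith

/-- helper: probability-weighted sums move by at most the sup of differences -/
lemma bpmdp_sum_diff {S : Type} [Fintype S] [Nonempty S] (p v w : S → ℝ)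
    (hp : ∀ t, 0 ≤ p t) (hps : ∑ t, p t = 1) :
    ∑ t, p t * v t ≤ ∑ t, p t * w t +
      Finset.univ.sup' Finset.univ_nonempty (fun t => v t - w t) := by
  set L := Finset.univ.sup' Finset.univ_nonempty (fun t => v t - w t) with hL
  have h : ∀ t ∈ Finset.univ, p t * v t ≤ p t * w t + p t * L := by
    intro t _
    have h1 : v t - w t ≤ L := by rw [hL]; exact Finset.le_sup' (fun t => v t - w t) (Finset.mem_univ t)
    nlinarith [hp t]
  calc ∑ t, p t * v t ≤ ∑ t, (p t * w t + p t * L) := Finset.sum_le_sum h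
    _ = ∑ t, p t * w t + (∑ t, p t) * L := by
        rw [Finset.sum_add_distrib, Finset.sum_mul]
    _ = ∑ t, p t * w t + L := by rw [hps, one_mul]

section KEY
variable {S A : Type} [Fintype S] [Nonempty S] [DecidableEq S]

/-- The generic key lemma: policy improvement & single-switch value invariance. -/
lemma bpmdp_key (γ : ℝ) (hγ0 : 0 ≤ γ) (hγ1 : γ < 1)
    (R : A → S → ℝ) (F : A → S → (S → ℝ) → ℝ)
    (hF : ∀ (a : A) (s : S) (v w : S → ℝ), F a s v - F a s w ≤
      Finset.univ.sup' Finset.univ_nonempty (fun t => v t - w t))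
    (W : (S → A) → S → ℝ)
    (hW : ∀ σ s, W σ s = R (σ s) s + γ * F (σ s) s (W σ)) :
    (∀ σ τ : S → A,
      (∀ s, σ s ≠ τ s → ∀ t, W (Function.update σ s (τ s)) t ≤ W σ t) →
      ∀ s, W τ s ≤ W σ s)
    ∧ (∀ (σ τ : S → A) (s : S), (∀ t, W σ t = W τ t) →
        ∀ t, W (Function.update σ s (τ s)) t = W σ t) := by
  have WH1 : ∀ (τ : S → A) (x : S → ℝ),
      (∀ s, x s ≤ R (τ s) s + γ * F (τ s) s x) → ∀ s, x s ≤ W τ s := by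
    intro τ x hx
    exact bpmdp_comp γ hγ0 hγ1 (fun s => R (τ s) s) (fun s => F (τ s) s)
      (fun v w s => hF (τ s) s v w) x (W τ) hx (fun s => (hW τ s).ge)
  have WH2 : ∀ (τ : S → A) (x : S → ℝ),
      (∀ s, R (τ s) s + γ * F (τ s) s x ≤ x s) → ∀ s, W τ s ≤ x s := by
    intro τ x hx
    exact bpmdp_comp γ hγ0 hγ1 (fun s => R (τ s) s) (fun s => F (τ s) s)
      (fun v w s => hF (τ s) s v w) (W τ) x (fun s => (hW τ s).le) hx
  have QLEM : ∀ (σ : S → A) (s : S) (a' : A),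
      (∀ t, W (Function.update σ s a') t ≤ W σ t) →
      R a' s + γ * F a' s (W σ) ≤ W σ s := by
    intro σ s a' hle
    by_contra hlt
    push_neg at hlt
    set σ' := Function.update σ s a' with hσ'
    have hfix : ∀ t, W σ t ≤ R (σ' t) t + γ * F (σ' t) t (W σ) := by
      intro t
      by_cases ht : t = s
      · subst ht; rw [hσ', Function.update_self]; exact hlt.le
      · rw [hσ', Function.update_of_ne ht]; exact (hW σ t).le
    have h1 : ∀ t, W σ t ≤ W σ' t := WH1 σ' (W σ) hfix
    have heq : W σ' = W σ := funext fun t => le_antisymm (hle t) (h1 t)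
    have hbe := hW σ' s
    rw [heq] at hbe
    rw [hσ', Function.update_self] at hbe
    linarith
  constructor
  · intro σ τ h
    apply WH2 τ (W σ)
    intro s
    by_cases hs : σ s = τ s
    · rw [← hs]; exact (hW σ s).ge
    · exact QLEM σ s (τ s) (h s hs)
  · intro σ τ s heq t
    have hWστ : W σ = W τ := funext heq
    have hfix : ∀ t, W σ t = R ((Function.update σ s (τ s)) t) t
        + γ * F ((Function.update σ s (τ s)) t) t (W σ) := by
      intro t
      by_cases ht : t = s
      · subst ht
        rw [Function.update_self, hWστ]
        exact hW τ t
      · rw [Function.update_of_ne ht]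
        exact hW σ t
    have h1 := WH1 (Function.update σ s (τ s)) (W σ) (fun t => (hfix t).le)
    have h2 := WH2 (Function.update σ s (τ s)) (W σ) (fun t => (hfix t).ge)
    exact le_antisymm (h2 t) (h1 t)

end KEY

section LIP
variable {S A : Type} [Fintype S] [Nonempty S]

/-- lower Bellman functional -/
noncomputable def Fdd (l u : A → S → S → ℝ) (a : A) (s : S) (v : S → ℝ) : ℝ :=
  sInf {x | ∃ p : S → ℝ,
    ((∀ t, l a s t ≤ p t ∧ p t ≤ u a s t) ∧ ∑ t, p t = 1) ∧ x = ∑ t, p t * v t}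

/-- upper Bellman functional -/
noncomputable def Fuu (l u : A → S → S → ℝ) (a : A) (s : S) (v : S → ℝ) : ℝ :=
  sSup {x | ∃ p : S → ℝ,
    ((∀ t, l a s t ≤ p t ∧ p t ≤ u a s t) ∧ ∑ t, p t = 1) ∧ x = ∑ t, p t * v t}

variable (l u : A → S → S → ℝ) (hl0 : ∀ a s t, 0 ≤ l a s t)
  (q : A → S → S → ℝ) (hql : ∀ a s t, l a s t ≤ q a s t)
  (hqu : ∀ a s t, q a s t ≤ u a s t) (hqs : ∀ a s, ∑ t, q a s t = 1)

include hql hqu hqs in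

lemma bpmdp_ne (a : A) (s : S) (v : S → ℝ) :
    (∑ t, q a s t * v t) ∈ {x | ∃ p : S → ℝ,
      ((∀ t, l a s t ≤ p t ∧ p t ≤ u a s t) ∧ ∑ t, p t = 1) ∧ x = ∑ t, p t * v t} :=
  ⟨q a s, ⟨⟨fun t => ⟨hql a s t, hqu a s t⟩, hqs a s⟩, rfl⟩⟩

include hl0 in
lemma bpmdp_bddb (a : A) (s : S) (v : S → ℝ) :
    BddBelow {x | ∃ p : S → ℝ,
      ((∀ t, l a s t ≤ p t ∧ p t ≤ u a s t) ∧ ∑ t, p t = 1) ∧ x = ∑ t, p t * v t} := by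
  refine ⟨Finset.univ.inf' Finset.univ_nonempty v, ?_⟩
  rintro x ⟨p, ⟨⟨hpb, hps⟩, rfl⟩⟩
  calc Finset.univ.inf' Finset.univ_nonempty v
      = (∑ t, p t) * Finset.univ.inf' Finset.univ_nonempty v := by rw [hps, one_mul]
    _ = ∑ t, p t * Finset.univ.inf' Finset.univ_nonempty v := by rw [Finset.sum_mul]
    _ ≤ ∑ t, p t * v t := Finset.sum_le_sum fun t _ =>
        mul_le_mul_of_nonneg_left (Finset.inf'_le v (Finset.mem_univ t))
          (le_trans (hl0 a s t) (hpb t).1)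

include hl0 in
lemma bpmdp_bdda (a : A) (s : S) (v : S → ℝ) :
    BddAbove {x | ∃ p : S → ℝ,
      ((∀ t, l a s t ≤ p t ∧ p t ≤ u a s t) ∧ ∑ t, p t = 1) ∧ x = ∑ t, p t * v t} := by
  refine ⟨Finset.univ.sup' Finset.univ_nonempty v, ?_⟩
  rintro x ⟨p, ⟨⟨hpb, hps⟩, rfl⟩⟩
  calc ∑ t, p t * v t
      ≤ ∑ t, p t * Finset.univ.sup' Finset.univ_nonempty v := Finset.sum_le_sum fun t _ =>
        mul_le_mul_of_nonneg_left (Finset.le_sup' v (Finset.mem_univ t))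
          (le_trans (hl0 a s t) (hpb t).1)
    _ = (∑ t, p t) * Finset.univ.sup' Finset.univ_nonempty v := by rw [Finset.sum_mul]
    _ = Finset.univ.sup' Finset.univ_nonempty v := by rw [hps, one_mul]

include hl0 hql hqu hqs in
lemma Fdd_lip (a : A) (s : S) (v w : S → ℝ) :
    Fdd l u a s v - Fdd l u a s w ≤
      Finset.univ.sup' Finset.univ_nonempty (fun t => v t - w t) := by
  set L := Finset.univ.sup' Finset.univ_nonempty (fun t => v t - w t) with hL
  have key : Fdd l u a s v - L ≤ Fdd l u a s w := by
    apply le_csInf ⟨_, bpmdp_ne l u q hql hqu hqs a s w⟩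
    rintro x ⟨p, hp, rfl⟩
    have h1 : Fdd l u a s v ≤ ∑ t, p t * v t := csInf_le (bpmdp_bddb l u hl0 a s v) ⟨p, hp, rfl⟩
    have h2 : ∑ t, p t * v t ≤ ∑ t, p t * w t + L :=
      bpmdp_sum_diff p v w (fun t => le_trans (hl0 a s t) (hp.1 t).1) hp.2
    linarith
  linarith

include hl0 hql hqu hqs in
lemma Fuu_lip (a : A) (s : S) (v w : S → ℝ) :
    Fuu l u a s v - Fuu l u a s w ≤
      Finset.univ.sup' Finset.univ_nonempty (fun t => v t - w t) := by
  set L := Finset.univ.sup' Finset.univ_nonempty (fun t => v t - w t) with hL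
  have key : Fuu l u a s v ≤ Fuu l u a s w + L := by
    apply csSup_le ⟨_, bpmdp_ne l u q hql hqu hqs a s v⟩
    rintro x ⟨p, hp, rfl⟩
    have h1 : ∑ t, p t * w t ≤ Fuu l u a s w := le_csSup (bpmdp_bdda l u hl0 a s w) ⟨p, hp, rfl⟩
    have h2 : ∑ t, p t * v t ≤ ∑ t, p t * w t + L :=
      bpmdp_sum_diff p v w (fun t => le_trans (hl0 a s t) (hp.1 t).1) hp.2
    linarith
  linarith

lemma Fbb_lip (pb : A → S → S → ℝ) (hpb0 : ∀ a s t, 0 ≤ pb a s t)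
    (hpbs : ∀ a s, ∑ t, pb a s t = 1) (a : A) (s : S) (v w : S → ℝ) :
    (∑ t, pb a s t * v t) - (∑ t, pb a s t * w t) ≤
      Finset.univ.sup' Finset.univ_nonempty (fun t => v t - w t) := by
  have := bpmdp_sum_diff (pb a s) v w (hpb0 a s) (hpbs a s)
  linarith

end LIP

/-- Pareto dominance `V >_P V'` on value triples: componentwise `≥` and not equal. -/
def VdomP {S : Type} (x y : (S → ℝ) × (S → ℝ) × (S → ℝ)) : Prop :=
  ((∀ s, y.1 s ≤ x.1 s) ∧ (∀ s, y.2.1 s ≤ x.2.1 s) ∧ (∀ s, y.2.2 s ≤ x.2.2 s)) ∧ x ≠ y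

theorem stmt_12 (S A : Type) [Fintype S] [Nonempty S] [Fintype A] [DecidableEq A]
    (γ : ℝ) (hγ0 : 0 ≤ γ) (hγ1 : γ < 1)
    (l u : A → S → S → ℝ)
    (hl0 : ∀ a s t, 0 ≤ l a s t) (hlu : ∀ a s t, l a s t ≤ u a s t)
    (hsl : ∀ a s, ∑ t, l a s t ≤ 1) (hsu : ∀ a s, 1 ≤ ∑ t, u a s t)
    (rlo rbar rhi : A → S → ℝ)
    (hrl : ∀ a s, rlo a s ≤ rbar a s) (hrh : ∀ a s, rbar a s ≤ rhi a s)
    (pbar : A → S → S → ℝ)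
    (hpl : ∀ a s t, l a s t ≤ pbar a s t) (hpu : ∀ a s t, pbar a s t ≤ u a s t)
    (hpsum : ∀ a s, ∑ t, pbar a s t = 1)
    (vd vb vu : (S → A) → S → ℝ)
    (hvd : ∀ (π : S → A) (s : S), vd π s = rlo (π s) s + γ * sInf {x | ∃ p : S → ℝ,
      ((∀ t, l (π s) s t ≤ p t ∧ p t ≤ u (π s) s t) ∧ ∑ t, p t = 1) ∧ x = ∑ t, p t * vd π t})
    (hvb : ∀ (π : S → A) (s : S), vb π s = rbar (π s) s + γ * ∑ t, pbar (π s) s t * vb π t)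
    (hvu : ∀ (π : S → A) (s : S), vu π s = rhi (π s) s + γ * sSup {x | ∃ p : S → ℝ,
      ((∀ t, l (π s) s t ≤ p t ∧ p t ≤ u (π s) s t) ∧ ∑ t, p t = 1) ∧ x = ∑ t, p t * vu π t})
    (V : (S → A) → (S → ℝ) × (S → ℝ) × (S → ℝ))
    (hV : ∀ π, V π = (vd π, vb π, vu π))
    (π π' : S → A)
    (hopt : ¬ ∃ σ : S → A, VdomP (V σ) (V π')) :
    ∃ N ≤ Fintype.card S, ∃ seq : ℕ → S → A,
      seq 0 = π ∧ seq N = π' ∧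
      ∀ i < N, (Finset.univ.filter (fun s => seq i s ≠ seq (i + 1) s)).card = 1 ∧
        ¬ VdomP (V (seq i)) (V (seq (i + 1))) := by
  classical
  have hpb0 : ∀ a s t, 0 ≤ pbar a s t := fun a s t => le_trans (hl0 a s t) (hpl a s t)
  -- the three component key lemmas
  have Kd := bpmdp_key (S := S) (A := A) γ hγ0 hγ1 rlo (Fdd l u)
    (fun a s v w => Fdd_lip l u hl0 pbar hpl hpu hpsum a s v w) vd
    (fun σ s => hvd σ s)
  have Kb := bpmdp_key (S := S) (A := A) γ hγ0 hγ1 rbar (fun a s v => ∑ t, pbar a s t * v t)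
    (fun a s v w => Fbb_lip pbar hpb0 hpsum a s v w) vb hvb
  have Ku := bpmdp_key (S := S) (A := A) γ hγ0 hγ1 rhi (Fuu l u)
    (fun a s v w => Fuu_lip l u hl0 pbar hpl hpu hpsum a s v w) vu
    (fun σ s => hvu σ s)
  have main : ∀ n (π₀ : S → A), (Finset.univ.filter fun s => π₀ s ≠ π' s).card = n →
      ∃ N ≤ n, ∃ seq : ℕ → S → A, seq 0 = π₀ ∧ seq N = π' ∧
        ∀ i < N, (Finset.univ.filter (fun s => seq i s ≠ seq (i + 1) s)).card = 1 ∧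
          ¬ VdomP (V (seq i)) (V (seq (i + 1))) := by
    intro n
    induction n with
    | zero =>
      intro π₀ h0
      have hππ : π₀ = π' := by
        funext s
        by_contra hs
        have : s ∈ Finset.univ.filter fun s => π₀ s ≠ π' s :=
          Finset.mem_filter.mpr ⟨Finset.mem_univ s, hs⟩
        rw [Finset.card_eq_zero.mp h0] at this
        exact absurd this (Finset.notMem_empty s)
      exact ⟨0, le_refl 0, fun _ => π', hππ.symm, rfl, fun i hi => absurd hi (Nat.not_lt_zero i)⟩
    | succ n ih =>
      intro π₀ hcard
      have hne : ∃ s, π₀ s ≠ π' s := by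
        have : (Finset.univ.filter fun s => π₀ s ≠ π' s).Nonempty :=
          Finset.card_pos.mp (by rw [hcard]; exact Nat.succ_pos n)
        obtain ⟨s, hs⟩ := this
        exact ⟨s, (Finset.mem_filter.mp hs).2⟩
      by_cases hA : ∃ s, π₀ s ≠ π' s ∧ ¬ VdomP (V π₀) (V (Function.update π₀ s (π' s)))
      · obtain ⟨s, hs, hnd⟩ := hA
        set τ := Function.update π₀ s (π' s) with hτ
        have hcardτ : (Finset.univ.filter fun t => τ t ≠ π' t).card = n := by
          have hset : (Finset.univ.filter fun t => τ t ≠ π' t)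
              = (Finset.univ.filter fun t => π₀ t ≠ π' t).erase s := by
            ext t
            by_cases ht : t = s
            · subst ht
              simp [hτ, Function.update_self]
            · simp [hτ, Function.update_of_ne ht, ht]
          rw [hset, Finset.card_erase_of_mem
            (Finset.mem_filter.mpr ⟨Finset.mem_univ s, hs⟩), hcard]
          omega
        obtain ⟨N, hN, seq', h0', hN', hstep'⟩ := ih τ hcardτ
        refine ⟨N + 1, Nat.succ_le_succ hN,
          fun i => if i = 0 then π₀ else seq' (i - 1), ?_, ?_, ?_⟩
        · simp
        · simp [hN']
        · intro i hi
          rcases Nat.eq_zero_or_pos i with rfl | hip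
          · constructor
            · have hset : (Finset.univ.filter fun t =>
                  (if (0:ℕ) = 0 then π₀ else seq' (0-1)) t ≠
                  (if (0:ℕ)+1 = 0 then π₀ else seq' (0+1-1)) t) = {s} := by
                ext t
                simp only [if_pos rfl, if_neg (Nat.succ_ne_zero 0)]
                rw [show (0:ℕ)+1-1 = 0 from rfl, h0']
                by_cases ht : t = s
                · subst ht
                  simp [hτ, Function.update_self, hs]
                · simp [hτ, Function.update_of_ne ht, ht]
              rw [hset, Finset.card_singleton]
            · simpa [h0'] using hnd
          · have hlt : i - 1 < N := by omega
            have h := hstep' (i - 1) hlt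
            rw [show i - 1 + 1 = i from by omega] at h
            have e1 : (if i = 0 then π₀ else seq' (i - 1)) = seq' (i - 1) :=
              if_neg (by omega)
            simpa [e1] using h
      · push_neg at hA
        exfalso
        apply hopt
        refine ⟨π₀, ⟨⟨?_, ?_, ?_⟩, ?_⟩⟩
        · -- vd component
          simp only [hV]
          exact Kd.1 π₀ π' (fun s hs t => by
            have h := (hA s hs).1.1
            simpa [hV] using h t)
        · simp only [hV]
          exact Kb.1 π₀ π' (fun s hs t => by
            have h := (hA s hs).1.2.1
            simpa [hV] using h t)
        · simp only [hV]
          exact Ku.1 π₀ π' (fun s hs t => by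
            have h := (hA s hs).1.2.2
            simpa [hV] using h t)
        · -- V π₀ ≠ V π'
          intro hEq
          obtain ⟨s0, hs0⟩ := hne
          have hdom := hA s0 hs0
          apply hdom.2
          rw [hV, hV] at hEq
          rw [Prod.mk.injEq, Prod.mk.injEq] at hEq
          obtain ⟨ed, eb, eu⟩ := hEq
          have hd2 := Kd.2 π₀ π' s0 (fun t => congrFun ed t)
          have hb2 := Kb.2 π₀ π' s0 (fun t => congrFun eb t)
          have hu2 := Ku.2 π₀ π' s0 (fun t => congrFun eu t)
          rw [hV, hV]
          refine Prod.ext ?_ (Prod.ext ?_ ?_) <;> funext t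
          · exact (hd2 t).symm
          · exact (hb2 t).symm
          · exact (hu2 t).symm
  obtain ⟨N, hN, seq, h0, hNfin, hstep⟩ :=
    main (Finset.univ.filter fun s => π s ≠ π' s).card π rfl
  exact ⟨N, le_trans hN (le_trans (Finset.card_filter_le _ _)
    (le_of_eq Finset.card_univ)), seq, h0, hNfin, hstep⟩
end

section
/- In the bounded-parameter MDP setting with value triple V, fix any pure policy π₀ and let R be the set of all pure policies π such that there exist N ≤ Fintype.card S and a sequence of pure policies π₀ = σ₀, σ₁, …, σ_N = π with d(σ_i, σ_{i+1}) = 1 and ¬(V(σ_i) >_P V(σ_{i+1})) for every i < N (the case N = 0 gives π₀ ∈ R). Then {π ∈ R | ¬∃ σ ∈ R, V(σ) >_P V(π)} = {π : S → A | ¬∃ π' : S → A, V(π') >_P V(π)}; i.e., the non-dominated subset of R is exactly the Pareto frontier of pure policies. -/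
open Finset

lemma VdomP_trans {S : Type} {x y z : (S → ℝ) × (S → ℝ) × (S → ℝ)}
    (h1 : VdomP x y) (h2 : VdomP y z) : VdomP x z := by
  obtain ⟨⟨a1, b1, c1⟩, ne1⟩ := h1
  obtain ⟨⟨a2, b2, c2⟩, ne2⟩ := h2
  refine ⟨⟨fun s => (a2 s).trans (a1 s), fun s => (b2 s).trans (b1 s),
    fun s => (c2 s).trans (c1 s)⟩, ?_⟩
  intro hxz
  subst hxz
  exact ne2 (Prod.ext (funext fun s => le_antisymm (a1 s) (a2 s))
    (Prod.ext (funext fun s => le_antisymm (b1 s) (b2 s))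
      (funext fun s => le_antisymm (c1 s) (c2 s))))

open Classical in
noncomputable def updPol {S A : Type} (π : S → A) (s : S) (a : A) : S → A :=
  fun t => if t = s then a else π t

lemma updPol_same {S A : Type} (π : S → A) (s : S) (a : A) : updPol π s a s = a := by
  simp [updPol]

lemma updPol_ne {S A : Type} (π : S → A) {s t : S} (h : t ≠ s) (a : A) :
    updPol π s a t = π t := by simp [updPol, h]

lemma sum_shift {S : Type} [Fintype S] (p v w : S → ℝ) (m : ℝ)
    (hp0 : ∀ t, 0 ≤ p t) (hp1 : ∑ t, p t = 1) (hvw : ∀ t, v t + m ≤ w t) :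
    ∑ t, p t * v t + m ≤ ∑ t, p t * w t := by
  have h : ∀ t ∈ univ, p t * v t + p t * m ≤ p t * w t := fun t _ => by
    have h2 := mul_le_mul_of_nonneg_left (hvw t) (hp0 t)
    rw [mul_add] at h2; exact h2
  have h2 := Finset.sum_le_sum h
  rw [Finset.sum_add_distrib, ← Finset.sum_mul, hp1, one_mul] at h2
  exact h2

lemma keyGE {S A : Type} [Fintype S] [Nonempty S] (γ : ℝ) (hγ0 : 0 ≤ γ) (hγ1 : γ < 1)
    (r : A → S → ℝ) (f : A → S → (S → ℝ) → ℝ)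
    (hf : ∀ (a : A) (s : S) (v w : S → ℝ) (m : ℝ), (∀ t, v t + m ≤ w t) →
      f a s v + m ≤ f a s w)
    (π' : S → A) (v w : S → ℝ)
    (hw : ∀ s, w s = r (π' s) s + γ * f (π' s) s w)
    (hTv : ∀ s, v s ≤ r (π' s) s + γ * f (π' s) s v) :
    ∀ s, v s ≤ w s := by
  obtain ⟨s₀, -, hmin⟩ := Finset.exists_min_image Finset.univ (fun s => w s - v s)
    Finset.univ_nonempty
  set m := w s₀ - v s₀ with hm
  have h1 : ∀ t, v t + m ≤ w t := fun t => by
    have := hmin t (Finset.mem_univ t); linarith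
  have h2 := hf (π' s₀) s₀ v w m h1
  have h3 : γ * (f (π' s₀) s₀ v + m) ≤ γ * f (π' s₀) s₀ w :=
    mul_le_mul_of_nonneg_left h2 hγ0
  rw [mul_add] at h3
  have h4 := hw s₀
  have h5 := hTv s₀
  have hm0 : 0 ≤ m := by nlinarith
  intro s; have := h1 s; linarith

lemma keyLE {S A : Type} [Fintype S] [Nonempty S] (γ : ℝ) (hγ0 : 0 ≤ γ) (hγ1 : γ < 1)
    (r : A → S → ℝ) (f : A → S → (S → ℝ) → ℝ)
    (hf : ∀ (a : A) (s : S) (v w : S → ℝ) (m : ℝ), (∀ t, v t + m ≤ w t) →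
      f a s v + m ≤ f a s w)
    (π' : S → A) (v w : S → ℝ)
    (hw : ∀ s, w s = r (π' s) s + γ * f (π' s) s w)
    (hTv : ∀ s, r (π' s) s + γ * f (π' s) s v ≤ v s) :
    ∀ s, w s ≤ v s := by
  obtain ⟨s₀, -, hmax⟩ := Finset.exists_max_image Finset.univ (fun s => w s - v s)
    Finset.univ_nonempty
  set M := w s₀ - v s₀ with hM
  have h1 : ∀ t, w t + (-M) ≤ v t := fun t => by
    have := hmax t (Finset.mem_univ t); linarith
  have h2 := hf (π' s₀) s₀ w v (-M) h1
  have h3 : γ * (f (π' s₀) s₀ w + (-M)) ≤ γ * f (π' s₀) s₀ v :=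
    mul_le_mul_of_nonneg_left h2 hγ0
  rw [mul_add] at h3
  have h4 := hw s₀
  have h5 := hTv s₀
  have hM0 : M ≤ 0 := by nlinarith
  intro s
  have := hmax s (Finset.mem_univ s); linarith

lemma perComp {S A : Type} [Fintype S] [Nonempty S] (γ : ℝ) (hγ0 : 0 ≤ γ) (hγ1 : γ < 1)
    (r : A → S → ℝ) (f : A → S → (S → ℝ) → ℝ)
    (hf : ∀ (a : A) (s : S) (v w : S → ℝ) (m : ℝ), (∀ t, v t + m ≤ w t) →
      f a s v + m ≤ f a s w)
    (v : (S → A) → S → ℝ)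
    (hv : ∀ (π : S → A) (s : S), v π s = r (π s) s + γ * f (π s) s (v π))
    (π πs : S → A)
    (hσ : ∀ s, π s ≠ πs s → ∀ t, v (updPol π s (πs s)) t ≤ v π t) :
    ∀ t, v πs t ≤ v π t := by
  refine keyLE γ hγ0 hγ1 r f hf πs (v π) (v πs) (hv πs) ?_
  intro s
  by_cases h : π s = πs s
  · rw [← h]; exact (hv π s).ge
  · by_contra hlt
    push_neg at hlt
    have hσs : updPol π s (πs s) s = πs s := updPol_same π s (πs s)
    have hTge : ∀ t, v π t ≤ r (updPol π s (πs s) t) t + γ * f (updPol π s (πs s) t) t (v π) := by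
      intro t
      by_cases ht : t = s
      · subst ht; rw [hσs]; exact hlt.le
      · rw [updPol_ne π ht]; exact (hv π t).le
    have hge := keyGE γ hγ0 hγ1 r f hf (updPol π s (πs s)) (v π) (v (updPol π s (πs s)))
      (hv (updPol π s (πs s))) hTge
    have heq : v (updPol π s (πs s)) = v π := funext fun t => le_antisymm (hσ s h t) (hge t)
    have h2 : v π s = r (πs s) s + γ * f (πs s) s (v π) := by
      have h3 := hv (updPol π s (πs s)) s
      rw [hσs, heq] at h3
      exact h3
    linarith [hlt, h2.ge]

lemma perCompEq {S A : Type} [Fintype S] [Nonempty S] (γ : ℝ) (hγ0 : 0 ≤ γ) (hγ1 : γ < 1)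
    (r : A → S → ℝ) (f : A → S → (S → ℝ) → ℝ)
    (hf : ∀ (a : A) (s : S) (v w : S → ℝ) (m : ℝ), (∀ t, v t + m ≤ w t) →
      f a s v + m ≤ f a s w)
    (v : (S → A) → S → ℝ)
    (hv : ∀ (π : S → A) (s : S), v π s = r (π s) s + γ * f (π s) s (v π))
    (π πs : S → A)
    (heq : v πs = v π) (s : S) :
    v (updPol π s (πs s)) = v π := by
  have hT : ∀ t, v π t = r (updPol π s (πs s) t) t + γ * f (updPol π s (πs s) t) t (v π) := by
    intro t
    by_cases ht : t = s
    · subst ht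
      rw [updPol_same, ← heq]
      exact hv πs t
    · rw [updPol_ne π ht]; exact hv π t
  have h1 := keyGE γ hγ0 hγ1 r f hf (updPol π s (πs s)) (v π) (v (updPol π s (πs s)))
    (hv (updPol π s (πs s))) (fun t => (hT t).le)
  have h2 := keyLE γ hγ0 hγ1 r f hf (updPol π s (πs s)) (v π) (v (updPol π s (πs s)))
    (hv (updPol π s (πs s))) (fun t => (hT t).ge)
  exact funext fun t => le_antisymm (h2 t) (h1 t)
theorem stmt_13 (S A : Type) [Fintype S] [Nonempty S] [Fintype A] [DecidableEq A]
    (γ : ℝ) (hγ0 : 0 ≤ γ) (hγ1 : γ < 1)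
    (l u : A → S → S → ℝ)
    (hl0 : ∀ a s t, 0 ≤ l a s t) (hlu : ∀ a s t, l a s t ≤ u a s t)
    (hsl : ∀ a s, ∑ t, l a s t ≤ 1) (hsu : ∀ a s, 1 ≤ ∑ t, u a s t)
    (rlo rbar rhi : A → S → ℝ)
    (hrl : ∀ a s, rlo a s ≤ rbar a s) (hrh : ∀ a s, rbar a s ≤ rhi a s)
    (pbar : A → S → S → ℝ)
    (hpl : ∀ a s t, l a s t ≤ pbar a s t) (hpu : ∀ a s t, pbar a s t ≤ u a s t)
    (hpsum : ∀ a s, ∑ t, pbar a s t = 1)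
    (vd vb vu : (S → A) → S → ℝ)
    (hvd : ∀ (π : S → A) (s : S), vd π s = rlo (π s) s + γ * sInf {x | ∃ p : S → ℝ,
      ((∀ t, l (π s) s t ≤ p t ∧ p t ≤ u (π s) s t) ∧ ∑ t, p t = 1) ∧ x = ∑ t, p t * vd π t})
    (hvb : ∀ (π : S → A) (s : S), vb π s = rbar (π s) s + γ * ∑ t, pbar (π s) s t * vb π t)
    (hvu : ∀ (π : S → A) (s : S), vu π s = rhi (π s) s + γ * sSup {x | ∃ p : S → ℝ,
      ((∀ t, l (π s) s t ≤ p t ∧ p t ≤ u (π s) s t) ∧ ∑ t, p t = 1) ∧ x = ∑ t, p t * vu π t})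
    (V : (S → A) → (S → ℝ) × (S → ℝ) × (S → ℝ))
    (hV : ∀ π, V π = (vd π, vb π, vu π))
    (π₀ : S → A)
    (R : Set (S → A))
    (hR : R = {π : S → A | ∃ N ≤ Fintype.card S, ∃ seq : ℕ → S → A,
      seq 0 = π₀ ∧ seq N = π ∧
      ∀ i < N, (Finset.univ.filter (fun s => seq i s ≠ seq (i + 1) s)).card = 1 ∧
        ¬ VdomP (V (seq i)) (V (seq (i + 1)))}) :
    {π ∈ R | ¬ ∃ σ ∈ R, VdomP (V σ) (V π)} =
      {π : S → A | ¬ ∃ π' : S → A, VdomP (V π') (V π)} := by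
  
  classical
  have hp0 : ∀ (a : A) (s : S) (p : S → ℝ), (∀ t, l a s t ≤ p t ∧ p t ≤ u a s t) →
      ∀ t, 0 ≤ p t := fun a s p hp t => (hl0 a s t).trans (hp t).1
  have hmem : ∀ (a : A) (s : S) (v : S → ℝ), (∑ t, pbar a s t * v t) ∈
      {x | ∃ p : S → ℝ, ((∀ t, l a s t ≤ p t ∧ p t ≤ u a s t) ∧ ∑ t, p t = 1) ∧
        x = ∑ t, p t * v t} :=
    fun a s v => ⟨pbar a s, ⟨fun t => ⟨hpl a s t, hpu a s t⟩, hpsum a s⟩, rfl⟩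
  have hbddB : ∀ (a : A) (s : S) (v : S → ℝ), BddBelow
      {x | ∃ p : S → ℝ, ((∀ t, l a s t ≤ p t ∧ p t ≤ u a s t) ∧ ∑ t, p t = 1) ∧
        x = ∑ t, p t * v t} := by
    intro a s v
    refine ⟨-(∑ t, u a s t * |v t|), ?_⟩
    rintro x ⟨p, ⟨hp, -⟩, rfl⟩
    have h1 : ∀ t ∈ Finset.univ, -(u a s t * |v t|) ≤ p t * v t := by
      intro t _
      have h2 : p t * (-|v t|) ≤ p t * v t :=
        mul_le_mul_of_nonneg_left (neg_abs_le (v t)) (hp0 a s p hp t)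
      have h3 : p t * |v t| ≤ u a s t * |v t| :=
        mul_le_mul_of_nonneg_right (hp t).2 (abs_nonneg _)
      rw [mul_neg] at h2
      linarith
    have := Finset.sum_le_sum h1
    rw [Finset.sum_neg_distrib] at this
    exact this
  have hbddA : ∀ (a : A) (s : S) (v : S → ℝ), BddAbove
      {x | ∃ p : S → ℝ, ((∀ t, l a s t ≤ p t ∧ p t ≤ u a s t) ∧ ∑ t, p t = 1) ∧
        x = ∑ t, p t * v t} := by
    intro a s v
    refine ⟨∑ t, u a s t * |v t|, ?_⟩
    rintro x ⟨p, ⟨hp, -⟩, rfl⟩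
    refine Finset.sum_le_sum fun t _ => ?_
    have h2 : p t * v t ≤ p t * |v t| :=
      mul_le_mul_of_nonneg_left (le_abs_self (v t)) (hp0 a s p hp t)
    have h3 : p t * |v t| ≤ u a s t * |v t| :=
      mul_le_mul_of_nonneg_right (hp t).2 (abs_nonneg _)
    linarith
  -- the three one-step operators and their shift property
  have hfd : ∀ (a : A) (s : S) (v w : S → ℝ) (m : ℝ), (∀ t, v t + m ≤ w t) →
      sInf {x | ∃ p : S → ℝ, ((∀ t, l a s t ≤ p t ∧ p t ≤ u a s t) ∧ ∑ t, p t = 1) ∧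
        x = ∑ t, p t * v t} + m ≤
      sInf {x | ∃ p : S → ℝ, ((∀ t, l a s t ≤ p t ∧ p t ≤ u a s t) ∧ ∑ t, p t = 1) ∧
        x = ∑ t, p t * w t} := by
    intro a s v w m hvw
    refine le_csInf ⟨_, hmem a s w⟩ ?_
    rintro x ⟨p, ⟨hp, hp1⟩, rfl⟩
    have h1 := sum_shift p v w m (hp0 a s p hp) hp1 hvw
    have h2 := csInf_le (hbddB a s v) ⟨p, ⟨hp, hp1⟩, rfl⟩
    linarith
  have hfu : ∀ (a : A) (s : S) (v w : S → ℝ) (m : ℝ), (∀ t, v t + m ≤ w t) →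
      sSup {x | ∃ p : S → ℝ, ((∀ t, l a s t ≤ p t ∧ p t ≤ u a s t) ∧ ∑ t, p t = 1) ∧
        x = ∑ t, p t * v t} + m ≤
      sSup {x | ∃ p : S → ℝ, ((∀ t, l a s t ≤ p t ∧ p t ≤ u a s t) ∧ ∑ t, p t = 1) ∧
        x = ∑ t, p t * w t} := by
    intro a s v w m hvw
    have h0 : sSup {x | ∃ p : S → ℝ, ((∀ t, l a s t ≤ p t ∧ p t ≤ u a s t) ∧ ∑ t, p t = 1) ∧
        x = ∑ t, p t * v t} ≤ sSup {x | ∃ p : S → ℝ,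
        ((∀ t, l a s t ≤ p t ∧ p t ≤ u a s t) ∧ ∑ t, p t = 1) ∧ x = ∑ t, p t * w t} - m := by
      refine csSup_le ⟨_, hmem a s v⟩ ?_
      rintro x ⟨p, ⟨hp, hp1⟩, rfl⟩
      have h1 := sum_shift p v w m (hp0 a s p hp) hp1 hvw
      have h2 := le_csSup (hbddA a s w) ⟨p, ⟨hp, hp1⟩, rfl⟩
      linarith
    linarith
  have hfb : ∀ (a : A) (s : S) (v w : S → ℝ) (m : ℝ), (∀ t, v t + m ≤ w t) →
      (∑ t, pbar a s t * v t) + m ≤ ∑ t, pbar a s t * w t :=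
    fun a s v w m hvw =>
      sum_shift (pbar a s) v w m (fun t => (hl0 a s t).trans (hpl a s t)) (hpsum a s) hvw
  -- restatement of dominance in terms of the components
  have hle : ∀ σ τ : S → A, VdomP (V σ) (V τ) ↔
      (((∀ s, vd τ s ≤ vd σ s) ∧ (∀ s, vb τ s ≤ vb σ s) ∧ (∀ s, vu τ s ≤ vu σ s)) ∧
        ¬ (vd σ = vd τ ∧ vb σ = vb τ ∧ vu σ = vu τ)) := by
    intro σ τ
    rw [VdomP, hV σ, hV τ]
    simp [Prod.ext_iff]
  -- key existence of a non-dominated unit step towards a Pareto-optimal policy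
  have claim : ∀ πs : S → A, (∀ τ, ¬ VdomP (V τ) (V πs)) →
      ∀ π : S → A, π ≠ πs →
      ∃ s, π s ≠ πs s ∧ ¬ VdomP (V π) (V (updPol π s (πs s))) := by
    intro πs hopt π hne
    by_contra hcon
    push_neg at hcon
    have hdle : ∀ t, vd πs t ≤ vd π t :=
      perComp γ hγ0 hγ1 rlo _ hfd vd hvd π πs
        (fun s hs => ((hle _ _).mp (hcon s hs)).1.1)
    have hble : ∀ t, vb πs t ≤ vb π t :=
      perComp γ hγ0 hγ1 rbar _ hfb vb hvb π πs
        (fun s hs => ((hle _ _).mp (hcon s hs)).1.2.1)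
    have hule : ∀ t, vu πs t ≤ vu π t :=
      perComp γ hγ0 hγ1 rhi _ hfu vu hvu π πs
        (fun s hs => ((hle _ _).mp (hcon s hs)).1.2.2)
    have hEq : vd π = vd πs ∧ vb π = vb πs ∧ vu π = vu πs := by
      have h := hopt π
      rw [hle] at h
      push_neg at h
      exact h ⟨hdle, hble, hule⟩
    obtain ⟨s, hs⟩ : ∃ s, π s ≠ πs s := by
      by_contra h; push_neg at h; exact hne (funext h)
    have e1 := perCompEq γ hγ0 hγ1 rlo _ hfd vd hvd π πs hEq.1.symm s
    have e2 := perCompEq γ hγ0 hγ1 rbar _ hfb vb hvb π πs hEq.2.1.symm s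
    have e3 := perCompEq γ hγ0 hγ1 rhi _ hfu vu hvu π πs hEq.2.2.symm s
    refine (hcon s hs).2 ?_
    rw [hV, hV, e1, e2, e3]
  -- building the path
  have path : ∀ πs : S → A, (∀ τ, ¬ VdomP (V τ) (V πs)) →
      ∀ n : ℕ, ∀ π : S → A, (Finset.univ.filter fun s => π s ≠ πs s).card = n →
      ∃ seq : ℕ → S → A, seq 0 = π ∧ seq n = πs ∧
        ∀ i < n, (Finset.univ.filter (fun s => seq i s ≠ seq (i + 1) s)).card = 1 ∧
          ¬ VdomP (V (seq i)) (V (seq (i + 1))) := by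
    intro πs hopt n
    induction n with
    | zero =>
      intro π hcard
      have hππ : π = πs := by
        funext t
        by_contra ht
        have hmem' : t ∈ Finset.univ.filter fun s => π s ≠ πs s := by simp [ht]
        rw [Finset.card_eq_zero] at hcard
        simp [hcard] at hmem'
      exact ⟨fun _ => π, rfl, hππ, fun i hi => absurd hi (Nat.not_lt_zero i)⟩
    | succ n ih =>
      intro π hcard
      have hne : π ≠ πs := by
        intro h
        subst h
        simp at hcard
      obtain ⟨s, hs, hstep0⟩ := claim πs hopt π hne
      have hfil : (Finset.univ.filter fun t => updPol π s (πs s) t ≠ πs t) =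
          (Finset.univ.filter fun t => π t ≠ πs t).erase s := by
        ext t
        simp only [Finset.mem_filter, Finset.mem_erase, Finset.mem_univ, true_and]
        by_cases ht : t = s
        · subst ht; simp [updPol_same]
        · simp [updPol_ne π ht, ht]
      have hcard' : (Finset.univ.filter fun t => updPol π s (πs s) t ≠ πs t).card = n := by
        rw [hfil, Finset.card_erase_of_mem (by simp [hs]), hcard]
        omega
      obtain ⟨seq', h0', hN', hstep'⟩ := ih (updPol π s (πs s)) hcard'
      refine ⟨fun i => if i = 0 then π else seq' (i - 1), rfl, by simp [hN'], ?_⟩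
      intro i hi
      rcases Nat.eq_zero_or_pos i with h0 | hpos
      · subst h0
        constructor
        · show (Finset.univ.filter fun t => π t ≠ seq' 0 t).card = 1
          rw [h0']
          have hone : (Finset.univ.filter fun t => π t ≠ updPol π s (πs s) t) = {s} := by
            ext t
            simp only [Finset.mem_filter, Finset.mem_univ, true_and, Finset.mem_singleton]
            by_cases ht : t = s
            · subst ht; simp [updPol_same, hs]
            · simp [updPol_ne π ht, ht]
          rw [hone, Finset.card_singleton]
        · show ¬ VdomP (V π) (V (seq' 0))
          rw [h0']
          exact hstep0
      · obtain ⟨j, rfl⟩ := Nat.exists_eq_succ_of_ne_zero (Nat.pos_iff_ne_zero.mp hpos)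
        have hj : j < n := by omega
        exact hstep' j hj
  -- membership of Pareto-optimal policies in R
  have mem_R : ∀ πs : S → A, (∀ τ, ¬ VdomP (V τ) (V πs)) → πs ∈ R := by
    intro πs hopt
    obtain ⟨seq, h0, hN, hstep⟩ :=
      path πs hopt (Finset.univ.filter fun s => π₀ s ≠ πs s).card π₀ rfl
    rw [hR]
    exact ⟨_, le_trans (Finset.card_filter_le _ _) (le_of_eq Finset.card_univ),
      seq, h0, hN, hstep⟩
  -- existence of a Pareto-optimal policy above any policy
  have opt : ∀ π' : S → A, ∃ πs : S → A,
      (∀ τ, ¬ VdomP (V τ) (V πs)) ∧ (πs = π' ∨ VdomP (V πs) (V π')) := by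
    have key : ∀ k : ℕ, ∀ π' : S → A,
        (Finset.univ.filter fun τ => VdomP (V τ) (V π')).card ≤ k →
        ∃ πs, (∀ τ, ¬ VdomP (V τ) (V πs)) ∧ (πs = π' ∨ VdomP (V πs) (V π')) := by
      intro k
      induction k with
      | zero =>
        intro π' h
        refine ⟨π', fun τ hτ => ?_, Or.inl rfl⟩
        have hmem' : τ ∈ Finset.univ.filter fun τ => VdomP (V τ) (V π') := by simp [hτ]
        rw [Nat.le_zero, Finset.card_eq_zero] at h
        simp [h] at hmem'
      | succ k ih =>
        intro π' h
        by_cases hC : ∀ τ, ¬ VdomP (V τ) (V π')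
        · exact ⟨π', hC, Or.inl rfl⟩
        · push_neg at hC
          obtain ⟨τ, hτ⟩ := hC
          have hsub : (Finset.univ.filter fun ρ => VdomP (V ρ) (V τ)) ⊂
              Finset.univ.filter fun ρ => VdomP (V ρ) (V π') := by
            have hsubset : (Finset.univ.filter fun ρ => VdomP (V ρ) (V τ)) ⊆
                Finset.univ.filter fun ρ => VdomP (V ρ) (V π') := by
              intro ρ hρ
              simp only [Finset.mem_filter, Finset.mem_univ, true_and] at hρ ⊢
              exact VdomP_trans hρ hτ
            refine (Finset.ssubset_iff_of_subset hsubset).mpr ⟨τ, by simp [hτ], ?_⟩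
            simp only [Finset.mem_filter, Finset.mem_univ, true_and]
            exact fun h => h.2 rfl
          have hlt := Finset.card_lt_card hsub
          obtain ⟨πs, h1, h2⟩ := ih τ (by omega)
          refine ⟨πs, h1, Or.inr ?_⟩
          rcases h2 with rfl | h2
          · exact hτ
          · exact VdomP_trans h2 hτ
    intro π'
    exact key _ π' le_rfl
  -- conclusion
  ext π
  simp only [Set.mem_setOf_eq, Set.mem_sep_iff]
  constructor
  · rintro ⟨hπR, hnd⟩ ⟨π', hπ'⟩
    obtain ⟨πs, hoptπs, hor⟩ := opt π'
    have hdom : VdomP (V πs) (V π) := by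
      rcases hor with rfl | h2
      · exact hπ'
      · exact VdomP_trans h2 hπ'
    exact hnd ⟨πs, mem_R πs hoptπs, hdom⟩
  · intro h
    have hopt : ∀ τ, ¬ VdomP (V τ) (V π) := fun τ hτ => h ⟨τ, hτ⟩
    exact ⟨mem_R π hopt, fun ⟨σ, _, hσ⟩ => h ⟨σ, hσ⟩⟩
end

section
/- Consider the subset-sum gadget SBMDP built from n ≥ 1, nonnegative weights m : Fin n → ℝ and discount factor γ ∈ (0,1). For every set I ⊆ Fin n, let π_I be the pure policy with π_I(q i) = action a if i ∈ I and π_I(q i) = action b if i ∉ I (decisions at the other states are irrelevant since both actions there coincide). Then the average value satisfies v̄(π_I)(q 0) = (∑ i, m i) + ∑ i ∉ I, m i, and the worst-case value satisfies v↓(π_I)(q 0) = ∑ i ∈ I, m i. -/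
/-- States of the subset-sum gadget SBMDP: an absorbing state `t` and,
for each `i : Fin n`, the four states `q i`, `sbar i`, `sdn i` (= s↓ i),
`sup i` (= s↑ i). -/
inductive GState (n : ℕ) where
  | q : Fin n → GState n
  | sbar : Fin n → GState n
  | sdn : Fin n → GState n
  | sup : Fin n → GState n
  | t : GState n
  deriving DecidableEq, Fintype

/-- The two actions of the gadget. -/
inductive GAct where
  | a | b
  deriving DecidableEq

instance : Fintype GAct := ⟨{GAct.a, GAct.b}, fun x => by cases x <;> simp⟩

namespace GState

/-- Successor of stage `i`: `q (i+1)` if it exists, otherwise the absorbing state `t`. -/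
def nxt {n : ℕ} (i : Fin n) : GState n :=
  if h : (i : ℕ) + 1 < n then GState.q ⟨(i : ℕ) + 1, h⟩ else GState.t

/-- Dirac (indicator) probability row concentrated on `s`. -/
def ind {n : ℕ} (s : GState n) : GState n → ℝ :=
  fun t' => if t' = s then 1 else 0

/-- Lower transition-probability bounds of the gadget. -/
def lo {n : ℕ} : GState n → GAct → GState n → ℝ
  | .q i, .a => ind (.sbar i)
  | .q _, .b => fun _ => 0
  | .sbar i, _ => ind (nxt i)
  | .sdn i, _ => ind (nxt i)
  | .sup i, _ => ind (nxt i)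
  | .t, _ => ind .t

/-- Upper transition-probability bounds of the gadget. -/
def hi {n : ℕ} : GState n → GAct → GState n → ℝ
  | .q i, .a => ind (.sbar i)
  | .q i, .b => fun t' => if t' = GState.sdn i ∨ t' = GState.sup i then 1 else 0
  | .sbar i, _ => ind (nxt i)
  | .sdn i, _ => ind (nxt i)
  | .sup i, _ => ind (nxt i)
  | .t, _ => ind .t

/-- Average transition probabilities of the gadget. -/
noncomputable def avg {n : ℕ} : GState n → GAct → GState n → ℝ
  | .q i, .a => ind (.sbar i)
  | .q i, .b => fun t' => if t' = GState.sdn i ∨ t' = GState.sup i then 1 / 2 else 0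
  | .sbar i, _ => ind (nxt i)
  | .sdn i, _ => ind (nxt i)
  | .sup i, _ => ind (nxt i)
  | .t, _ => ind .t

/-- State-based (certain) rewards of the gadget, with `k i = 2 i + 1`. -/
noncomputable def rew {n : ℕ} (m : Fin n → ℝ) (γ : ℝ) : GState n → ℝ
  | .q _ => 0
  | .t => 0
  | .sdn _ => 0
  | .sbar i => m i / γ ^ (2 * (i : ℕ) + 1)
  | .sup i => 4 * m i / γ ^ (2 * (i : ℕ) + 1)

end GState

/-!
From each decision state `q i` the process spends two steps in stage `i` and moves on to the next
stage, so both value functions satisfy `v (q i) = c i / γ ^ (2 i) + γ ^ 2 * v (q (i + 1))`, where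
`c i` is the discounted reward collected in stage `i`. The rewards are scaled by `γ ^ (2 i + 1)`
exactly so that `c i` does not depend on `γ`: action `a` yields `m i`; action `b` yields
`(0 + 4 m i) / 2 = 2 m i` on average, and `0` in the worst case, because `s↑ i` is worth at least
as much as `s↓ i` and the adversary may put all the mass on `s↓ i`. Multiplying by `γ ^ (2 i)`
turns the recursion into a telescoping sum, so `v (q 0) = ∑ i, c i`.
-/

section WorstExpectation

variable {σ : Type*} [Fintype σ]

noncomputable def worstExpectation (l u v : σ → ℝ) : ℝ :=
  sInf {x | ∃ p : σ → ℝ, ((∀ t', l t' ≤ p t' ∧ p t' ≤ u t') ∧ ∑ t', p t' = 1) ∧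
    x = ∑ t', p t' * v t'}

variable [DecidableEq σ]

theorem worstExpectation_dirac (s : σ) (v : σ → ℝ) :
    worstExpectation (fun t' => if t' = s then 1 else 0) (fun t' => if t' = s then 1 else 0) v
      = v s := by
  have hset : {x | ∃ p : σ → ℝ, ((∀ t', (if t' = s then 1 else 0) ≤ p t' ∧
      p t' ≤ (if t' = s then 1 else 0)) ∧ ∑ t', p t' = 1) ∧ x = ∑ t', p t' * v t'} = {v s} := by
    ext x
    constructor
    · rintro ⟨p, ⟨hp, -⟩, rfl⟩
      obtain rfl : p = fun t' => if t' = s then 1 else 0 :=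
        funext fun t' => le_antisymm (hp t').2 (hp t').1
      simp
    · rintro rfl
      exact ⟨_, ⟨fun _ => ⟨le_rfl, le_rfl⟩, by simp⟩, by simp⟩
  rw [worstExpectation, hset, csInf_singleton]

theorem worstExpectation_eq_of_forall_le (S : σ → Prop) [DecidablePred S] {s₀ : σ} (hs₀ : S s₀)
    {v : σ → ℝ} (hmin : ∀ t', S t' → v s₀ ≤ v t') :
    worstExpectation (fun _ => 0) (fun t' => if S t' then 1 else 0) v = v s₀ := by
  refine IsLeast.csInf_eq
    ⟨⟨fun t' => if t' = s₀ then 1 else 0, ⟨fun t' => ?_, by simp⟩, by simp⟩, ?_⟩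
  · dsimp only
    split_ifs <;> simp_all
  · rintro x ⟨p, ⟨hp, hsum⟩, rfl⟩
    calc v s₀ = ∑ t', p t' * v s₀ := by rw [← Finset.sum_mul, hsum, one_mul]
      _ ≤ ∑ t', p t' * v t' := Finset.sum_le_sum fun t' _ => by
          by_cases h : S t'
          · exact mul_le_mul_of_nonneg_left (hmin t' h) (hp t').1
          · have := hp t'
            simp only [h, if_false] at this
            rw [le_antisymm this.2 this.1, zero_mul, zero_mul]

end WorstExpectation

theorem eq_zero_of_eq_mul_self {γ x : ℝ} (hγ1 : γ ≠ 1) (h : x = γ * x) : x = 0 := by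
  by_contra hx
  exact hγ1 ((mul_eq_right₀ hx).1 h.symm)

theorem mul_stage_reward {γ : ℝ} (hγ : γ ≠ 0) (k : ℕ) (r x : ℝ) :
    γ * (r / γ ^ (2 * k + 1) + γ * x) = r / γ ^ (2 * k) + γ ^ 2 * x := by
  field_simp
  ring

theorem sum_ite_eq_or_eq_mul {σ : Type*} [Fintype σ] [DecidableEq σ] {a b : σ} (hab : a ≠ b)
    (c : ℝ) (v : σ → ℝ) :
    ∑ t', (if t' = a ∨ t' = b then c else 0) * v t' = c * v a + c * v b := by
  simp [ite_mul, Finset.sum_ite, Finset.filter_or, Finset.filter_eq', hab]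

namespace GState

variable {n : ℕ}

def IsAverageValue (m : Fin n → ℝ) (γ : ℝ) (π : GState n → GAct) (v : GState n → ℝ) : Prop :=
  ∀ s, v s = rew m γ s + γ * ∑ t', avg s (π s) t' * v t'

def IsWorstCaseValue (m : Fin n → ℝ) (γ : ℝ) (π : GState n → GAct) (v : GState n → ℝ) : Prop :=
  ∀ s, v s = rew m γ s + γ * worstExpectation (lo s (π s)) (hi s (π s)) v

theorem sum_ind_mul (s : GState n) (v : GState n → ℝ) : ∑ t', ind s t' * v t' = v s := by
  simp [ind]

theorem worstExpectation_ind (s : GState n) (v : GState n → ℝ) :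
    worstExpectation (ind s) (ind s) v = v s :=
  worstExpectation_dirac s v

theorem rows_eq_ind_nxt {i : Fin n} {s : GState n} (hs : s = sbar i ∨ s = sdn i ∨ s = sup i)
    (α : GAct) : lo s α = ind (nxt i) ∧ hi s α = ind (nxt i) ∧ avg s α = ind (nxt i) := by
  rcases hs with rfl | rfl | rfl <;> exact ⟨rfl, rfl, rfl⟩

def stage (k : ℕ) : GState n :=
  if h : k < n then q ⟨k, h⟩ else t

theorem nxt_eq_stage (i : Fin n) : nxt i = stage (i + 1) := rfl

theorem stage_of_lt {k : ℕ} (h : k < n) : stage k = q ⟨k, h⟩ := dif_pos h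

theorem stage_self : (stage n : GState n) = t := dif_neg (lt_irrefl n)

theorem eq_sum_of_stage_recurrence {γ : ℝ} (hγ : γ ≠ 0) (hn : 1 ≤ n) (f : GState n → ℝ)
    (c : Fin n → ℝ) (ht : f t = 0)
    (hstep : ∀ i : Fin n, f (q i) = c i / γ ^ (2 * (i : ℕ)) + γ ^ 2 * f (nxt i)) :
    f (q ⟨0, hn⟩) = ∑ i, c i := by
  set w : ℕ → ℝ := fun k => γ ^ (2 * k) * f (stage k)
  have hc : ∀ i : Fin n, c i = w i - w (i + 1) := by
    intro i
    simp only [w, stage_of_lt i.isLt, hstep i, nxt_eq_stage]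
    field_simp
    ring
  calc f (q ⟨0, hn⟩) = w 0 - w n := by simp [w, stage_self, ht, stage_of_lt hn]
    _ = ∑ k ∈ Finset.range n, (w k - w (k + 1)) := (Finset.sum_range_sub' w n).symm
    _ = ∑ i, c i := by rw [← Fin.sum_univ_eq_sum_range (fun k => w k - w (k + 1))]; simp [hc]

variable {m : Fin n → ℝ} {γ : ℝ} {π : GState n → GAct} {v : GState n → ℝ}

namespace IsAverageValue

theorem t_eq_zero (hv : IsAverageValue m γ π v) (hγ1 : γ ≠ 1) : v t = 0 :=
  eq_zero_of_eq_mul_self hγ1 (by simpa [rew, avg, sum_ind_mul] using hv t)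

theorem intermediate {i : Fin n} {s : GState n} (hv : IsAverageValue m γ π v)
    (hs : s = sbar i ∨ s = sdn i ∨ s = sup i) : v s = rew m γ s + γ * v (nxt i) := by
  rw [hv s, (rows_eq_ind_nxt hs (π s)).2.2, sum_ind_mul]

theorem q_of_a (hv : IsAverageValue m γ π v) (hγ : γ ≠ 0) {i : Fin n} (hπ : π (q i) = .a) :
    v (q i) = m i / γ ^ (2 * (i : ℕ)) + γ ^ 2 * v (nxt i) := by
  rw [hv, hπ, avg, sum_ind_mul, hv.intermediate (Or.inl rfl), rew, rew, zero_add,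
    mul_stage_reward hγ]

theorem q_of_b (hv : IsAverageValue m γ π v) (hγ : γ ≠ 0) {i : Fin n} (hπ : π (q i) = .b) :
    v (q i) = 2 * m i / γ ^ (2 * (i : ℕ)) + γ ^ 2 * v (nxt i) := by
  rw [hv, hπ, avg, sum_ite_eq_or_eq_mul (by simp), hv.intermediate (Or.inr (Or.inl rfl)),
    hv.intermediate (Or.inr (Or.inr rfl))]
  simp only [rew]
  field_simp
  ring

end IsAverageValue

namespace IsWorstCaseValue

theorem t_eq_zero (hv : IsWorstCaseValue m γ π v) (hγ1 : γ ≠ 1) : v t = 0 :=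
  eq_zero_of_eq_mul_self hγ1 (by simpa [rew, lo, hi, worstExpectation_ind] using hv t)

theorem intermediate {i : Fin n} {s : GState n} (hv : IsWorstCaseValue m γ π v)
    (hs : s = sbar i ∨ s = sdn i ∨ s = sup i) : v s = rew m γ s + γ * v (nxt i) := by
  rw [hv s, (rows_eq_ind_nxt hs (π s)).1, (rows_eq_ind_nxt hs (π s)).2.1, worstExpectation_ind]

theorem q_of_a (hv : IsWorstCaseValue m γ π v) (hγ : γ ≠ 0) {i : Fin n} (hπ : π (q i) = .a) :
    v (q i) = m i / γ ^ (2 * (i : ℕ)) + γ ^ 2 * v (nxt i) := by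
  rw [hv, hπ, lo, hi, worstExpectation_ind, hv.intermediate (Or.inl rfl), rew, rew, zero_add,
    mul_stage_reward hγ]

theorem q_of_b (hv : IsWorstCaseValue m γ π v) (hγ : 0 < γ) {i : Fin n} (hm : 0 ≤ m i)
    (hπ : π (q i) = .b) : v (q i) = γ ^ 2 * v (nxt i) := by
  have hle : v (sdn i) ≤ v (sup i) := by
    rw [hv.intermediate (Or.inr (Or.inl rfl)), hv.intermediate (Or.inr (Or.inr rfl)), rew, rew]
    have : 0 ≤ 4 * m i / γ ^ (2 * (i : ℕ) + 1) := by positivity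
    linarith
  rw [hv, hπ, lo, hi, worstExpectation_eq_of_forall_le (fun t' => t' = sdn i ∨ t' = sup i)
    (Or.inl rfl) (by rintro _ (rfl | rfl) <;> simp [hle]), hv.intermediate (Or.inr (Or.inl rfl)),
    rew, rew]
  ring

end IsWorstCaseValue

end GState

theorem stmt_14 (n : ℕ) (hn : 1 ≤ n) (m : Fin n → ℝ) (hm : ∀ i, 0 ≤ m i)
    (γ : ℝ) (hγ0 : 0 < γ) (hγ1 : γ < 1)
    (vd vb : (GState n → GAct) → GState n → ℝ)
    (hvd : ∀ (π : GState n → GAct) (s : GState n),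
      vd π s = GState.rew m γ s + γ * sInf {x | ∃ p : GState n → ℝ,
        ((∀ t', GState.lo s (π s) t' ≤ p t' ∧ p t' ≤ GState.hi s (π s) t') ∧
          ∑ t', p t' = 1) ∧ x = ∑ t', p t' * vd π t'})
    (hvb : ∀ (π : GState n → GAct) (s : GState n),
      vb π s = GState.rew m γ s + γ * ∑ t', GState.avg s (π s) t' * vb π t')
    (I : Finset (Fin n))
    (πI : GState n → GAct)
    (hπI : ∀ i : Fin n, πI (GState.q i) = if i ∈ I then GAct.a else GAct.b) :
    vb πI (GState.q ⟨0, hn⟩) = (∑ i, m i) + ∑ i ∈ Iᶜ, m i ∧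
    vd πI (GState.q ⟨0, hn⟩) = ∑ i ∈ I, m i := by
  have hγ := hγ0.ne'
  have hb : GState.IsAverageValue m γ πI (vb πI) := hvb πI
  have hd : GState.IsWorstCaseValue m γ πI (vd πI) := hvd πI
  constructor
  · rw [GState.eq_sum_of_stage_recurrence hγ hn (vb πI) (fun i => if i ∈ I then m i else 2 * m i)
      (hb.t_eq_zero hγ1.ne) fun i => ?_, ← Finset.sum_add_sum_compl I m, Finset.sum_ite,
      ← Finset.mul_sum]
    · simp [Finset.filter_not, ← Finset.compl_eq_univ_sdiff]
      ring
    · by_cases hi : i ∈ I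
      · simpa [hi] using hb.q_of_a hγ (by simp [hπI, hi])
      · simpa [hi] using hb.q_of_b hγ (by simp [hπI, hi])
  · rw [GState.eq_sum_of_stage_recurrence hγ hn (vd πI) (fun i => if i ∈ I then m i else 0)
      (hd.t_eq_zero hγ1.ne) fun i => ?_, Finset.sum_ite_mem, Finset.univ_inter]
    by_cases hi : i ∈ I
    · simpa [hi] using hd.q_of_a hγ (by simp [hπI, hi])
    · simpa [hi] using hd.q_of_b hγ0 (hm i) (by simp [hπI, hi])
end
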